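/- arXiv:2408.12524 — 14 statements merged into one kernel-verified Lean document; each statement's English description precedes it below -/
import Mathlib

section
/- Let T and I be finite sets, and let f, x : T × I → ℝ be nonnegative functions such that ∑_{i∈I} f(t,i) ≤ 1 for every t ∈ T, and such that for every subset S ⊆ T × I one has ∑_{(t,i)∈S} x(t,i) ≤ 1 − ∏_{t∈T} (1 − ∑_{i : (t,i)∈S} f(t,i)). Then for every subset I′ ⊆ I, ∑_{t∈T} ∑_{i∈I′} max(2·x(t,i) − f(t,i), 0) ≤ 1 − ln 2 + 2·∑_{t∈T} (∑_{i∈I′} x(t,i))². -/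
open Finset

/-- `exp (-u) ≤ 1 - u + u^2/2` for `u ≥ 0`. -/
lemma exp_neg_le_quadratic {u : ℝ} (hu : 0 ≤ u) :
    Real.exp (-u) ≤ 1 - u + u ^ 2 / 2 := by
  have h1 : 1 + u + u ^ 2 / 2 ≤ Real.exp u := Real.quadratic_le_exp_of_nonneg hu
  have h2 : (0:ℝ) < 1 + u + u ^ 2 / 2 := by nlinarith
  have h3 : Real.exp (-u) * Real.exp u = 1 := by
    rw [← Real.exp_add]; simp
  have h4 : Real.exp (-u) * (1 + u + u ^ 2 / 2) ≤ 1 := by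
    calc Real.exp (-u) * (1 + u + u ^ 2 / 2) ≤ Real.exp (-u) * Real.exp u :=
          mul_le_mul_of_nonneg_left h1 (Real.exp_pos _).le
      _ = 1 := h3
  have h5 : (1:ℝ) ≤ (1 - u + u ^ 2 / 2) * (1 + u + u ^ 2 / 2) := by nlinarith
  nlinarith [Real.exp_pos (-u)]

/-- Key pointwise bound: if `0 ≤ F ≤ 2y - 2y²` then `exp (-(F + 2y²)) ≤ 1 - F`. -/
lemma key_exp {y F : ℝ} (hy : 0 ≤ y) (hF0 : 0 ≤ F) (hF : F ≤ 2 * y - 2 * y ^ 2) :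
    Real.exp (-(F + 2 * y ^ 2)) ≤ 1 - F := by
  set a : ℝ := -(F + 2 * y ^ 2) with ha
  set b : ℝ := -(2 * y) with hb
  have hba : b - a = F - (2 * y - 2 * y ^ 2) := by rw [ha, hb]; ring
  have h1 : Real.exp b ≤ 1 - 2 * y + 2 * y ^ 2 := by
    have := exp_neg_le_quadratic (by linarith : (0:ℝ) ≤ 2 * y)
    rw [hb]; nlinarith [this]
  have h2 : Real.exp a ≤ 1 := by
    apply Real.exp_le_one_iff.mpr
    rw [ha]; nlinarith
  have h3 : (b - a) + 1 ≤ Real.exp (b - a) := Real.add_one_le_exp _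
  have h4 : Real.exp b = Real.exp a * Real.exp (b - a) := by
    rw [← Real.exp_add]; ring_nf
  have hexpa := Real.exp_pos a
  -- exp a ≤ exp b + (a - b) ≤ (1 - 2y + 2y²) + (2y - 2y² - F) = 1 - F
  have h5 : Real.exp a ≤ Real.exp b + (a - b) := by nlinarith
  have : a - b = (2 * y - 2 * y ^ 2) - F := by rw [ha, hb]; ring
  linarith [h5, h1, this ▸ le_refl (a - b)]

/-- Converse Jensen Inequality (Lemma 6.6). -/
theorem converse_jensen_inequality
    {T I : Type*} [Fintype T] [Fintype I] [DecidableEq T] [DecidableEq I]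
    (f x : T × I → ℝ)
    (hf : ∀ p, 0 ≤ f p) (hx : ∀ p, 0 ≤ x p)
    (hf1 : ∀ t : T, ∑ i : I, f (t, i) ≤ 1)
    (hLP : ∀ S : Finset (T × I),
      ∑ p ∈ S, x p ≤ 1 - ∏ t : T, (1 - ∑ i ∈ univ.filter (fun i => (t, i) ∈ S), f (t, i)))
    (I' : Finset I) :
    ∑ t : T, ∑ i ∈ I', max (2 * x (t, i) - f (t, i)) 0
      ≤ 1 - Real.log 2 + 2 * ∑ t : T, (∑ i ∈ I', x (t, i)) ^ 2 := by
  classical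
  set A : T → Finset I := fun t => I'.filter (fun i => 0 < 2 * x (t, i) - f (t, i)) with hA
  set y : T → ℝ := fun t => ∑ i ∈ A t, x (t, i) with hy
  set F : T → ℝ := fun t => ∑ i ∈ A t, f (t, i) with hFdef
  have hy0 : ∀ t, 0 ≤ y t := fun t => Finset.sum_nonneg fun i _ => hx _
  have hF0 : ∀ t, 0 ≤ F t := fun t => Finset.sum_nonneg fun i _ => hf _
  -- rewrite the LHS
  have hmax : ∀ t, ∑ i ∈ I', max (2 * x (t, i) - f (t, i)) 0 = 2 * y t - F t := by
    intro t
    have : ∑ i ∈ I', max (2 * x (t, i) - f (t, i)) 0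
        = ∑ i ∈ A t, (2 * x (t, i) - f (t, i)) := by
      rw [hA, Finset.sum_filter]
      apply Finset.sum_congr rfl
      intro i _
      rcases lt_or_ge 0 (2 * x (t, i) - f (t, i)) with h | h
      · rw [if_pos h, max_eq_left h.le]
      · rw [if_neg (not_lt.mpr h), max_eq_right h]
    rw [this, hy, hFdef, Finset.sum_sub_distrib, Finset.mul_sum]
  -- the set B of "significant" times
  set B : Finset T := univ.filter (fun t => F t ≤ 2 * y t - 2 * (y t) ^ 2) with hB
  -- the LP constraint applied to S_B
  set SB : Finset (T × I) := univ.filter (fun p : T × I => p.1 ∈ B ∧ p.2 ∈ A p.1) with hSB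
  have hfilter : ∀ t : T, univ.filter (fun i => (t, i) ∈ SB)
      = if t ∈ B then A t else ∅ := by
    intro t
    split_ifs with ht
    · ext i
      simp [hSB, ht, hA]
    · ext i
      simp [hSB, ht]
  have hsumx : ∑ p ∈ SB, x p = ∑ t ∈ B, y t := by
    have hrhs : ∑ t : T, (if t ∈ B then y t else 0) = ∑ t ∈ B, y t := by
      rw [Finset.sum_ite_mem, Finset.univ_inter]
    rw [hSB, Finset.sum_filter, Fintype.sum_prod_type, ← hrhs]
    apply Finset.sum_congr rfl
    intro t _
    split_ifs with ht
    · have hinner : ∑ i : I, (if i ∈ A t then x (t, i) else 0) = ∑ i ∈ A t, x (t, i) := by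
        rw [Finset.sum_ite_mem, Finset.univ_inter]
      rw [show y t = ∑ i ∈ A t, x (t, i) from rfl, ← hinner]
      apply Finset.sum_congr rfl
      intro i _
      simp [ht]
    · apply Finset.sum_eq_zero
      intro i _
      simp [ht]
  have hprod : ∏ t : T, (1 - ∑ i ∈ univ.filter (fun i => (t, i) ∈ SB), f (t, i))
      = ∏ t ∈ B, (1 - F t) := by
    have hrhs : ∏ t : T, (if t ∈ B then (1 - F t) else 1) = ∏ t ∈ B, (1 - F t) := by
      rw [Finset.prod_ite_mem, Finset.univ_inter]
    rw [← hrhs]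
    apply Finset.prod_congr rfl
    intro t _
    rw [hfilter t]
    split_ifs with ht
    · rfl
    · simp
  have hLPB : ∑ t ∈ B, y t ≤ 1 - ∏ t ∈ B, (1 - F t) := by
    have := hLP SB
    rwa [hsumx, hprod] at this
  -- lower bound the product by an exponential
  set W : ℝ := ∑ t ∈ B, (F t + 2 * (y t) ^ 2) with hW
  have hprodexp : Real.exp (-W) ≤ ∏ t ∈ B, (1 - F t) := by
    have : Real.exp (-W) = ∏ t ∈ B, Real.exp (-(F t + 2 * (y t) ^ 2)) := by
      rw [← Real.exp_sum]
      congr 1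
      rw [hW, ← Finset.sum_neg_distrib]
    rw [this]
    apply Finset.prod_le_prod
    · intro t _
      exact (Real.exp_pos _).le
    · intro t ht
      have htB : F t ≤ 2 * y t - 2 * (y t) ^ 2 := by
        rw [hB] at ht
        exact (Finset.mem_filter.mp ht).2
      exact key_exp (hy0 t) (hF0 t) htB
  -- the analytic step
  have hW0 : 0 ≤ W := Finset.sum_nonneg fun t _ => by nlinarith [hF0 t, sq_nonneg (y t)]
  have hlog : Real.log 2 - W + 1 ≤ 2 * Real.exp (-W) := by
    have h := Real.add_one_le_exp (Real.log 2 - W)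
    have : Real.exp (Real.log 2 - W) = 2 * Real.exp (-W) := by
      rw [Real.exp_sub, Real.exp_log (by norm_num : (0:ℝ) < 2), Real.exp_neg]
      ring
    linarith [this ▸ h]
  have hBsum : ∑ t ∈ B, (2 * y t - F t)
      ≤ 1 - Real.log 2 + ∑ t ∈ B, 2 * (y t) ^ 2 := by
    have h1 : ∑ t ∈ B, (2 * y t - F t)
        = 2 * ∑ t ∈ B, y t - ∑ t ∈ B, F t := by
      rw [Finset.sum_sub_distrib, Finset.mul_sum]
    have h2 : ∑ t ∈ B, F t + ∑ t ∈ B, 2 * (y t) ^ 2 = W := by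
      rw [hW, Finset.sum_add_distrib]
    have h3 : ∏ t ∈ B, (1 - F t) ≥ Real.exp (-W) := hprodexp
    have h4 := hLPB
    rw [h1]
    nlinarith [h4, h3, h2, hlog]
  -- the complement terms
  have hnotB : ∑ t ∈ univ.filter (fun t => ¬ (F t ≤ 2 * y t - 2 * (y t) ^ 2)), (2 * y t - F t)
      ≤ ∑ t ∈ univ.filter (fun t => ¬ (F t ≤ 2 * y t - 2 * (y t) ^ 2)), 2 * (y t) ^ 2 := by
    apply Finset.sum_le_sum
    intro t ht
    have := (Finset.mem_filter.mp ht).2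
    push_neg at this
    linarith
  -- assemble
  have hsplit : ∑ t : T, (2 * y t - F t)
      = ∑ t ∈ B, (2 * y t - F t)
        + ∑ t ∈ univ.filter (fun t => ¬ (F t ≤ 2 * y t - 2 * (y t) ^ 2)), (2 * y t - F t) := by
    rw [hB]
    exact (Finset.sum_filter_add_sum_filter_not univ _ _).symm
  have hsplit2 : ∑ t ∈ B, 2 * (y t) ^ 2
        + ∑ t ∈ univ.filter (fun t => ¬ (F t ≤ 2 * y t - 2 * (y t) ^ 2)), 2 * (y t) ^ 2
      = ∑ t : T, 2 * (y t) ^ 2 := by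
    rw [hB]
    exact Finset.sum_filter_add_sum_filter_not univ _ _
  have hyX : ∀ t, 2 * (y t) ^ 2 ≤ 2 * (∑ i ∈ I', x (t, i)) ^ 2 := by
    intro t
    have h1 : y t ≤ ∑ i ∈ I', x (t, i) := by
      rw [hy, hA]
      exact Finset.sum_le_sum_of_subset_of_nonneg (Finset.filter_subset _ _)
        (fun i _ _ => hx _)
    have := pow_le_pow_left₀ (hy0 t) h1 2
    linarith
  calc ∑ t : T, ∑ i ∈ I', max (2 * x (t, i) - f (t, i)) 0
      = ∑ t : T, (2 * y t - F t) := by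
        apply Finset.sum_congr rfl; intro t _; exact hmax t
    _ = ∑ t ∈ B, (2 * y t - F t)
        + ∑ t ∈ univ.filter (fun t => ¬ (F t ≤ 2 * y t - 2 * (y t) ^ 2)), (2 * y t - F t) :=
        hsplit
    _ ≤ (1 - Real.log 2 + ∑ t ∈ B, 2 * (y t) ^ 2)
        + ∑ t ∈ univ.filter (fun t => ¬ (F t ≤ 2 * y t - 2 * (y t) ^ 2)), 2 * (y t) ^ 2 :=
        add_le_add hBsum hnotB
    _ = 1 - Real.log 2 + ∑ t : T, 2 * (y t) ^ 2 := by rw [add_assoc, hsplit2]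
    _ ≤ 1 - Real.log 2 + ∑ t : T, 2 * (∑ i ∈ I', x (t, i)) ^ 2 := by
        have := Finset.sum_le_sum (fun t (_ : t ∈ univ) => hyX t)
        linarith
    _ = 1 - Real.log 2 + 2 * ∑ t : T, (∑ i ∈ I', x (t, i)) ^ 2 := by
        rw [Finset.mul_sum]
end

section
/- Let n ≥ 1 and let μ : Fin n → ℝ satisfy μ_j ≥ 0 for all j and ∑_j μ_j = 1. For each j let c_j = ∑_{k<j} μ_k and let I_j = [c_j, c_j + μ_j) be a half-open interval. Then for every j: (i) the Lebesgue measure of {η ∈ [0, 1/2) : η ∈ I_j and η + 1/2 ∈ I_j} equals (1/2)·max(2μ_j − 1, 0); and (ii) the Lebesgue measure of {η ∈ [0, 1/2) : exactly one of η and η + 1/2 lies in I_j} equals min(μ_j, 1 − μ_j). Equivalently, if η is drawn uniformly from [0, 1/2), then both η and η + 1/2 lie in I_j with probability (2μ_j − 1)^+, and exactly one of them lies in I_j with probability 2·min(μ_j, 1 − μ_j). -/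
open MeasureTheory Finset

private lemma ofReal_eq_ofReal_max0 (z : ℝ) :
    ENNReal.ofReal z = ENNReal.ofReal (max z 0) := by
  rcases le_total z 0 with h | h
  · rw [max_eq_right h, ENNReal.ofReal_eq_zero.mpr h, ENNReal.ofReal_zero]
  · rw [max_eq_left h]

/-- Lemma 3.1: probabilities of the Type Decomposition algorithm. -/
theorem type_decomposition_probability
    (n : ℕ) (hn : 1 ≤ n) (μ : Fin n → ℝ)
    (hμ : ∀ j, 0 ≤ μ j) (hsum : ∑ j, μ j = 1)
    (c : Fin n → ℝ) (hc : ∀ j, c j = ∑ k ∈ univ.filter (fun k => k < j), μ k)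
    (I : Fin n → Set ℝ) (hI : ∀ j, I j = Set.Ico (c j) (c j + μ j)) (j : Fin n) :
    volume {η : ℝ | η ∈ Set.Ico (0 : ℝ) (1/2) ∧ η ∈ I j ∧ η + 1/2 ∈ I j}
        = ENNReal.ofReal ((1/2) * max (2 * μ j - 1) 0)
    ∧ volume {η : ℝ | η ∈ Set.Ico (0 : ℝ) (1/2) ∧ Xor' (η ∈ I j) (η + 1/2 ∈ I j)}
        = ENNReal.ofReal (min (μ j) (1 - μ j)) := by
  set a := c j with ha
  set m := μ j with hm
  have hm0 : 0 ≤ m := hμ j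
  have ha0 : 0 ≤ a := by
    rw [ha, hc]; exact Finset.sum_nonneg fun k _ => hμ k
  have ham : a + m ≤ 1 := by
    rw [ha, hc, hm, ← hsum]
    have hj : j ∉ univ.filter (fun k => k < j) := by simp
    have heq : ∑ k ∈ univ.filter (fun k => k < j), μ k + μ j
        = ∑ k ∈ insert j (univ.filter (fun k => k < j)), μ k := by
      rw [Finset.sum_insert hj, add_comm]
    rw [heq]
    exact Finset.sum_le_sum_of_subset_of_nonneg (Finset.subset_univ _)
      (fun i _ _ => hμ i)
  constructor
  · -- both points in I j
    have hAset : {η : ℝ | η ∈ Set.Ico (0 : ℝ) (1/2) ∧ η ∈ I j ∧ η + 1/2 ∈ I j}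
        = Set.Ico a (a + m - 1/2) := by
      ext η
      simp only [hI j, Set.mem_Ico, Set.mem_setOf_eq, ← ha, ← hm]
      constructor
      · rintro ⟨⟨h0, h1⟩, ⟨h2, h3⟩, h4, h5⟩
        exact ⟨h2, by linarith⟩
      · rintro ⟨h1, h2⟩
        exact ⟨⟨by linarith, by linarith⟩, ⟨h1, by linarith⟩, by linarith, by linarith⟩
    rw [hAset, Real.volume_Ico]
    have h1 : a + m - 1/2 - a = m - 1/2 := by ring
    have h2 : (1/2 : ℝ) * max (2 * m - 1) 0 = max (m - 1/2) 0 := by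
      rcases le_total (2 * m - 1) 0 with h | h
      · rw [max_eq_right h, max_eq_right (by linarith), mul_zero]
      · rw [max_eq_left h, max_eq_left (by linarith)]; ring
    rw [h1, h2, ofReal_eq_ofReal_max0 (m - 1/2)]
  · -- exactly one point in I j
    have hXset : {η : ℝ | η ∈ Set.Ico (0 : ℝ) (1/2) ∧ Xor' (η ∈ I j) (η + 1/2 ∈ I j)}
        = Set.Ico (max a (a + m - 1/2)) (min (1/2) (a + m))
          ∪ Set.Ico (max 0 (a - 1/2)) (min (a + m - 1/2) a) := by
      ext η
      simp only [hI j, Set.mem_Ico, Set.mem_setOf_eq, Set.mem_union, Xor',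
        max_le_iff, lt_min_iff, ← ha, ← hm]
      constructor
      · rintro ⟨⟨h0, h1⟩, hx⟩
        rcases hx with ⟨⟨p1, p2⟩, hq⟩ | ⟨⟨q1, q2⟩, hp⟩
        · push_neg at hq
          have h5 : a + m ≤ η + 1/2 := hq (by linarith)
          exact Or.inl ⟨⟨p1, by linarith⟩, h1, p2⟩
        · push_neg at hp
          have hηa : η < a := by
            by_contra hcon
            push_neg at hcon
            have := hp hcon
            linarith
          exact Or.inr ⟨⟨h0, by linarith⟩, by linarith, hηa⟩
      · rintro (⟨⟨hb1, hb2⟩, hb3, hb4⟩ | ⟨⟨hc1, hc2⟩, hc3, hc4⟩)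
        · refine ⟨⟨by linarith, hb3⟩, Or.inl ⟨⟨hb1, hb4⟩, ?_⟩⟩
          rintro ⟨-, h⟩
          linarith
        · refine ⟨⟨hc1, by linarith⟩, Or.inr ⟨⟨by linarith, by linarith⟩, ?_⟩⟩
          rintro ⟨h, -⟩
          linarith
    have hdisj : Disjoint (Set.Ico (max a (a + m - 1/2)) (min (1/2) (a + m)))
        (Set.Ico (max 0 (a - 1/2)) (min (a + m - 1/2) a)) := by
      rw [Set.disjoint_left]
      rintro x ⟨hx1, -⟩ ⟨-, hx2⟩
      have h1 : a ≤ x := le_trans (le_max_left _ _) hx1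
      have h2 : x < a := lt_of_lt_of_le hx2 (min_le_right _ _)
      linarith
    rw [hXset, measure_union hdisj measurableSet_Ico, Real.volume_Ico, Real.volume_Ico,
      ofReal_eq_ofReal_max0 (min (1/2) (a + m) - max a (a + m - 1/2)),
      ofReal_eq_ofReal_max0 (min (a + m - 1/2) a - max 0 (a - 1/2)),
      ← ENNReal.ofReal_add (le_max_right _ _) (le_max_right _ _)]
    congr 1
    rcases le_total (1/2 : ℝ) m with h1 | h1
    · rw [max_eq_right (by linarith : a ≤ a + m - 1/2),
        min_eq_left (by linarith : (1/2 : ℝ) ≤ a + m),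
        min_eq_right (by linarith : a ≤ a + m - 1/2),
        max_eq_left (by linarith : (a - 1/2 : ℝ) ≤ 0),
        min_eq_right (by linarith : (1 - m : ℝ) ≤ m),
        max_eq_left (by linarith : (0:ℝ) ≤ 1/2 - (a + m - 1/2)),
        max_eq_left (by linarith : (0:ℝ) ≤ a - 0)]
      ring
    · rw [max_eq_left (by linarith : a + m - 1/2 ≤ a),
        min_eq_left (by linarith : a + m - 1/2 ≤ a),
        min_eq_left (by linarith : m ≤ 1 - m)]
      rcases le_total a (1/2 : ℝ) with h2 | h2
      · rw [max_eq_left (by linarith : (a - 1/2 : ℝ) ≤ 0)]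
        rcases le_total (a + m) (1/2 : ℝ) with h3 | h3
        · rw [min_eq_right h3,
            max_eq_left (by linarith : (0:ℝ) ≤ a + m - a),
            max_eq_right (by linarith : (a + m - 1/2 : ℝ) - 0 ≤ 0)]
          ring
        · rw [min_eq_left h3,
            max_eq_left (by linarith : (0:ℝ) ≤ 1/2 - a),
            max_eq_left (by linarith : (0:ℝ) ≤ a + m - 1/2 - 0)]
          ring
      · rw [min_eq_left (by linarith : (1/2:ℝ) ≤ a + m),
          max_eq_right (by linarith : (1/2:ℝ) - a ≤ 0),
          max_eq_right (by linarith : (0:ℝ) ≤ a - 1/2),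
          max_eq_left (by linarith : (0:ℝ) ≤ a + m - 1/2 - (a - 1/2))]
        ring
end

section
/- For all real numbers a, b, x with a ≥ b ≥ 0 and x ≥ 0, one has 1 − a·x ≤ (1 + b·x)·exp(−(a+b)·x). -/
/-!
With `f u = (1 + u) * exp (-u)`, `t = a * x` and `s = b * x`, multiplying the claim by `exp t`
turns it into `f (-t) ≤ f s`. Since `0 ≤ s ≤ t` and `f` decreases on `[0, ∞)`, it suffices that
`f (-t) ≤ f t`, which is the Padé bound `exp (2 * t) ≤ (1 + t) / (1 - t)` for `0 ≤ t < 1`.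
-/

open Real Set

lemma antitoneOn_one_add_mul_exp_neg :
    AntitoneOn (fun u : ℝ => (1 + u) * exp (-u)) (Ici 0) := by
  intro s hs t _ hst
  have hs : 0 ≤ s := hs
  have h : 1 + t ≤ (1 + s) * exp (t - s) := by
    nlinarith [add_one_le_exp (t - s)]
  calc (1 + t) * exp (-t)
      ≤ (1 + s) * exp (t - s) * exp (-t) := mul_le_mul_of_nonneg_right h (exp_pos _).le
    _ = (1 + s) * exp (-s) := by rw [mul_assoc, ← exp_add]; ring_nf

lemma one_sub_mul_exp_le_one_add_mul_exp_neg {t : ℝ} (ht : 0 ≤ t) :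
    (1 - t) * exp t ≤ (1 + t) * exp (-t) := by
  rcases le_or_gt 1 t with h1 | h1
  · have : (1 - t) * exp t ≤ 0 := mul_nonpos_of_nonpos_of_nonneg (by linarith) (exp_pos _).le
    exact this.trans (by positivity)
  · have hpade := exp_le_two_add_div_two_sub (x := 2 * t) (by positivity) (by linarith)
    rw [le_div_iff₀ (by linarith)] at hpade
    have h : (1 - t) * exp (2 * t) ≤ 1 + t := by linarith
    calc (1 - t) * exp t = (1 - t) * exp (2 * t) * exp (-t) := by
          rw [mul_assoc, ← exp_add]; ring_nf
      _ ≤ (1 + t) * exp (-t) := mul_le_mul_of_nonneg_right h (exp_pos _).le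

/-- Appendix B.1: for a ≥ b ≥ 0 and x ≥ 0, 1 − a·x ≤ (1 + b·x)·e^{−(a+b)x}. -/
theorem one_sub_ax_le (a b x : ℝ) (hab : a ≥ b) (hb : b ≥ 0) (hx : x ≥ 0) :
    1 - a * x ≤ (1 + b * x) * Real.exp (-(a + b) * x) := by
  have hs : 0 ≤ b * x := mul_nonneg hb hx
  have ht : 0 ≤ a * x := mul_nonneg (hb.trans hab) hx
  have hst : b * x ≤ a * x := mul_le_mul_of_nonneg_right hab hx
  have key : (1 - a * x) * exp (a * x) ≤ (1 + b * x) * exp (-(b * x)) :=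
    (one_sub_mul_exp_le_one_add_mul_exp_neg ht).trans
      (antitoneOn_one_add_mul_exp_neg (mem_Ici.2 hs) (mem_Ici.2 ht) hst)
  calc 1 - a * x = (1 - a * x) * exp (a * x) * exp (-(a * x)) := by
        rw [mul_assoc, ← exp_add, add_neg_cancel, exp_zero, mul_one]
    _ ≤ (1 + b * x) * exp (-(b * x)) * exp (-(a * x)) :=
        mul_le_mul_of_nonneg_right key (exp_pos _).le
    _ = (1 + b * x) * exp (-(a + b) * x) := by rw [mul_assoc, ← exp_add]; ring_nf
end

section
/- The function h : [0,1] → ℝ defined piecewise by h(y) = 1/4 + y/2 − (1/4)·e^{−2y} for 0 ≤ y ≤ 1/2, and h(y) = 1 − e^{−2y}·((e+1)/4 + (e/2)·y) for 1/2 ≤ y ≤ 1, is well defined (the two formulas agree at y = 1/2, both equal to 1/2 − 1/(4e)) and concave on the interval [0,1]. -/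
/-!
Both pieces and their derivatives agree at `1/2`, so the glued function is differentiable on `ℝ`
and its derivative is the glued derivative. That derivative is antitone on all of `ℝ`: left of
`1/2` it is `1/2 + e^{-2y}/2`, and right of `1/2` its own derivative `e^{-2y}(e - 1 - 2ey)` is
negative. Hence the function is concave on `ℝ`, in particular on `[0,1]`.
-/

open Real Set

theorem hasDerivAt_ite_le {E : Type*} [NormedAddCommGroup E] [NormedSpace ℝ E]
    {f g f' g' : ℝ → E} {c : ℝ} (hf : ∀ x, HasDerivAt f (f' x) x)
    (hg : ∀ x, HasDerivAt g (g' x) x) (hfg : f c = g c) (hfg' : f' c = g' c) (x : ℝ) :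
    HasDerivAt (fun x => if x ≤ c then f x else g x) (if x ≤ c then f' x else g' x) x := by
  rcases lt_trichotomy x c with hlt | rfl | hgt
  · rw [if_pos hlt.le]
    refine (hf x).congr_of_eventuallyEq ?_
    filter_upwards [Iio_mem_nhds hlt] with y hy
    exact if_pos (le_of_lt hy)
  · rw [if_pos le_rfl]
    have hleft : HasDerivWithinAt (fun y => if y ≤ x then f y else g y) (f' x) (Iic x) x :=
      (hf x).hasDerivWithinAt.congr (fun y hy => if_pos hy) (if_pos le_rfl)
    have hright : HasDerivWithinAt (fun y => if y ≤ x then f y else g y) (f' x) (Ici x) x := by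
      rw [hfg']
      refine (hg x).hasDerivWithinAt.congr (fun y hy => ?_) (by simp [hfg])
      rcases eq_or_lt_of_le (mem_Ici.mp hy) with rfl | hxy
      · simp [hfg]
      · exact if_neg (not_le.mpr hxy)
    simpa only [Iic_union_Ici, hasDerivWithinAt_univ] using hleft.union hright
  · rw [if_neg (not_le.mpr hgt)]
    refine (hg x).congr_of_eventuallyEq ?_
    filter_upwards [Ioi_mem_nhds hgt] with y hy
    exact if_neg (not_le.mpr hy)

theorem antitone_ite_le {α β : Type*} [LinearOrder α] [Preorder β] {f g : α → β} {c : α}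
    (hf : AntitoneOn f (Iic c)) (hg : AntitoneOn g (Ici c)) (hfg : f c = g c) :
    Antitone (fun x => if x ≤ c then f x else g x) := by
  refine AntitoneOn.Iic_union_Ici (hf.congr fun x hx => (if_pos hx).symm)
    (hg.congr fun x hx => ?_)
  rcases eq_or_lt_of_le (mem_Ici.mp hx) with rfl | hcx
  · simp [hfg]
  · exact (if_neg (not_le.mpr hcx)).symm

theorem hasDerivAt_exp_neg_two_mul (y : ℝ) :
    HasDerivAt (fun y => exp (-2 * y)) (-2 * exp (-2 * y)) y := by
  simpa [mul_comm] using ((hasDerivAt_id y).const_mul (-2)).exp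

namespace MatchingBound

noncomputable def lowPiece (y : ℝ) : ℝ := 1/4 + y/2 - (1/4) * exp (-2 * y)

noncomputable def highPiece (y : ℝ) : ℝ := 1 - exp (-2 * y) * ((exp 1 + 1)/4 + (exp 1 / 2) * y)

noncomputable def lowPieceDeriv (y : ℝ) : ℝ := 1/2 + exp (-2 * y) / 2

noncomputable def highPieceDeriv (y : ℝ) : ℝ := exp (-2 * y) * (1/2 + exp 1 * y)

theorem hasDerivAt_lowPiece (y : ℝ) : HasDerivAt lowPiece (lowPieceDeriv y) y := by
  have := ((hasDerivAt_id y).div_const 2).const_add (1/4) |>.sub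
    ((hasDerivAt_exp_neg_two_mul y).const_mul (1/4))
  refine this.congr_deriv ?_
  simp only [lowPieceDeriv]
  ring

theorem hasDerivAt_highPiece (y : ℝ) : HasDerivAt highPiece (highPieceDeriv y) y := by
  have hlin : HasDerivAt (fun y : ℝ => (exp 1 + 1)/4 + (exp 1 / 2) * y) (exp 1 / 2) y := by
    simpa using ((hasDerivAt_id y).const_mul (exp 1 / 2)).const_add ((exp 1 + 1)/4)
  have := ((hasDerivAt_exp_neg_two_mul y).mul hlin).const_sub 1
  refine this.congr_deriv ?_
  simp only [highPieceDeriv]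
  ring

theorem hasDerivAt_highPieceDeriv (y : ℝ) :
    HasDerivAt highPieceDeriv (exp (-2 * y) * (exp 1 - 1 - 2 * exp 1 * y)) y := by
  have hlin : HasDerivAt (fun y : ℝ => 1/2 + exp 1 * y) (exp 1) y := by
    simpa using ((hasDerivAt_id y).const_mul (exp 1)).const_add (1/2)
  refine ((hasDerivAt_exp_neg_two_mul y).mul hlin).congr_deriv ?_
  ring

theorem exp_neg_two_mul_half : exp (-2 * (1/2)) = (exp 1)⁻¹ := by
  rw [← exp_neg]
  norm_num

theorem lowPiece_half : lowPiece (1/2) = 1/2 - 1/(4 * exp 1) := by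
  simp only [lowPiece, exp_neg_two_mul_half]
  field_simp
  ring

theorem highPiece_half : highPiece (1/2) = 1/2 - 1/(4 * exp 1) := by
  simp only [highPiece, exp_neg_two_mul_half]
  field_simp
  ring

theorem lowPieceDeriv_half : lowPieceDeriv (1/2) = highPieceDeriv (1/2) := by
  simp only [lowPieceDeriv, highPieceDeriv, exp_neg_two_mul_half]
  field_simp
  ring

theorem antitone_lowPieceDeriv : Antitone lowPieceDeriv := fun x y hxy => by
  have : exp (-2 * y) ≤ exp (-2 * x) := exp_le_exp.mpr (by linarith)
  simp only [lowPieceDeriv]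
  linarith

theorem antitoneOn_highPieceDeriv : AntitoneOn highPieceDeriv (Ici (1/2)) := by
  have hdiff y := (hasDerivAt_highPieceDeriv y).differentiableAt
  refine antitoneOn_of_deriv_nonpos (convex_Ici _)
    (fun y _ => (hdiff y).continuousAt.continuousWithinAt)
    (fun y _ => (hdiff y).differentiableWithinAt) fun y hy => ?_
  rw [interior_Ici, mem_Ioi] at hy
  rw [(hasDerivAt_highPieceDeriv y).deriv]
  have : exp 1 - 1 - 2 * exp 1 * y ≤ 0 := by nlinarith [exp_pos 1]
  exact mul_nonpos_of_nonneg_of_nonpos (exp_pos _).le this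

end MatchingBound

open MatchingBound in
/-- Appendix B.3: the piecewise matching-probability bound (Equation (9)) is
well defined and concave on [0,1]. -/
theorem concave_socs_matching_bound :
    (1/4 + (1/2 : ℝ)/2 - (1/4) * exp (-2 * (1/2))
        = 1 - exp (-2 * (1/2)) * ((exp 1 + 1)/4 + (exp 1 / 2) * (1/2)))
    ∧ (1/4 + (1/2 : ℝ)/2 - (1/4) * exp (-2 * (1/2)) = 1/2 - 1/(4 * exp 1))
    ∧ ConcaveOn ℝ (Set.Icc (0 : ℝ) 1)
        (fun y : ℝ => if y ≤ 1/2 then 1/4 + y/2 - (1/4) * exp (-2 * y)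
          else 1 - exp (-2 * y) * ((exp 1 + 1)/4 + (exp 1 / 2) * y)) := by
  have hjoin : lowPiece (1/2) = highPiece (1/2) := lowPiece_half.trans highPiece_half.symm
  refine ⟨hjoin, lowPiece_half, ?_⟩
  have hderiv := hasDerivAt_ite_le hasDerivAt_lowPiece hasDerivAt_highPiece hjoin lowPieceDeriv_half
  have hconcave : ConcaveOn ℝ univ (fun y => if y ≤ 1/2 then lowPiece y else highPiece y) := by
    refine Antitone.concaveOn_univ_of_deriv (fun y => (hderiv y).differentiableAt) ?_
    rw [funext fun y => (hderiv y).deriv]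
    exact antitone_ite_le (antitone_lowPieceDeriv.antitoneOn _) antitoneOn_highPieceDeriv
      lowPieceDeriv_half
  exact hconcave.subset (subset_univ _) (convex_Icc 0 1)
end

section
/- The function f(x) = ln(3 + (1 + x)·e^{−x}) is concave on the interval [0,1]. -/
/-!
On `x ≤ 1` the function `g x = (1 + x) e^{-x}` has `g'' x = (x - 1) e^{-x} ≤ 0`, so `3 + g` is
concave there; it is positive on `[0, 1]`, and `log` is concave and increasing on `(0, ∞)`.
-/

open Real Set

section Composition

variable {𝕜 E β γ : Type*} [Semiring 𝕜] [PartialOrder 𝕜] [AddCommMonoid E] [SMul 𝕜 E]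
  [AddCommMonoid β] [PartialOrder β] [SMul 𝕜 β] [AddCommMonoid γ] [PartialOrder γ] [SMul 𝕜 γ]

theorem ConcaveOn.comp_of_mapsTo {s : Set E} {t : Set β} {f : E → β} {g : β → γ}
    (hg : ConcaveOn 𝕜 t g) (hf : ConcaveOn 𝕜 s f) (hst : MapsTo f s t)
    (hg' : MonotoneOn g t) : ConcaveOn 𝕜 s (g ∘ f) :=
  ⟨hf.1, fun _ hx _ hy _ _ ha hb hab =>
    (hg.2 (hst hx) (hst hy) ha hb hab).trans <|
      hg' (hg.1 (hst hx) (hst hy) ha hb hab) (hst (hf.1 hx hy ha hb hab)) (hf.2 hx hy ha hb hab)⟩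

end Composition

theorem ConcaveOn.log {E : Type*} [AddCommMonoid E] [Module ℝ E] {s : Set E} {f : E → ℝ}
    (hf : ConcaveOn ℝ s f) (hpos : ∀ x ∈ s, 0 < f x) : ConcaveOn ℝ s (fun x => Real.log (f x)) :=
  strictConcaveOn_log_Ioi.concaveOn.comp_of_mapsTo hf hpos strictMonoOn_log.monotoneOn

theorem hasDerivAt_one_add_mul_exp_neg (x : ℝ) :
    HasDerivAt (fun x => (1 + x) * exp (-x)) (-x * exp (-x)) x :=
  (((hasDerivAt_id' x).const_add 1).mul (hasDerivAt_neg x).exp).congr_deriv (by ring)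

theorem hasDerivAt_neg_mul_exp_neg (x : ℝ) :
    HasDerivAt (fun x => -x * exp (-x)) ((x - 1) * exp (-x)) x :=
  ((hasDerivAt_neg x).mul (hasDerivAt_neg x).exp).congr_deriv (by ring)

theorem concaveOn_one_add_mul_exp_neg : ConcaveOn ℝ (Iic 1) (fun x => (1 + x) * exp (-x)) := by
  refine concaveOn_of_hasDerivWithinAt2_nonpos (convex_Iic 1) (by fun_prop)
    (fun x _ => (hasDerivAt_one_add_mul_exp_neg x).hasDerivWithinAt)
    (fun x _ => (hasDerivAt_neg_mul_exp_neg x).hasDerivWithinAt) fun x hx => ?_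
  rw [interior_Iic] at hx
  exact mul_nonpos_of_nonpos_of_nonneg (sub_nonpos.2 hx.le) (exp_pos _).le

/-- Appendix B.5: concavity of f(x) = ln(3 + (1+x)e^{−x}) on [0,1]. -/
theorem concave_adwords_convergence_function :
    ConcaveOn ℝ (Set.Icc (0 : ℝ) 1)
      (fun x : ℝ => Real.log (3 + (1 + x) * Real.exp (-x))) := by
  have hconc : ConcaveOn ℝ (Icc (0 : ℝ) 1) (fun x => 3 + (1 + x) * exp (-x)) :=
    (concaveOn_const 3 (convex_Icc 0 1)).add
      (concaveOn_one_add_mul_exp_neg.subset Icc_subset_Iic_self (convex_Icc 0 1))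
  refine hconc.log fun x hx => ?_
  have : 0 ≤ (1 + x) * exp (-x) := mul_nonneg (by linarith [hx.1]) (exp_pos _).le
  linarith
end

section
/- Let c = 0.413 and define h : [0,1] → ℝ by h(y) = 1 − e^{−y}·( 3/4 + (1/4)·(1 + max(y − c, 0)/4)·exp(−max(y − c, 0)/4) )². Then h is concave on the interval [0,1]. -/
/-!
Write `u = (y - c)⁺`, `F t = 3/4 + (1/4)(1 + t/4) e^{-t/4}` and `S t = t e^{-t/4} / 32`, so that
`F' = -S/2` and `F'(0) = 0`. Hence `y ↦ F(u)` is differentiable even at `y = c`, and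
`h' (y) = e^{-y} F(u) (F(u) + S(u))`. This equals `e^{-y}` for `y ≤ c` and
`e^{-c} k(y - c)` for `y ≥ c`, where `k t = e^{-t} F(t) (F(t) + S(t))` satisfies
`e^{t} k'(t) = F (S' - F - 2S) - S²/2 ≤ 0` because `S' ≤ 1/32 < 3/4 ≤ F`.
So `h'` is antitone on all of `ℝ`, for every `c`.
-/

open Real Set

lemma hasDerivAt_comp_max_sub_zero {g g' : ℝ → ℝ} (hg : ∀ t, HasDerivAt g (g' t) t)
    (hg₀ : g' 0 = 0) (c y : ℝ) :
    HasDerivAt (fun y => g (max (y - c) 0)) (g' (max (y - c) 0)) y := by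
  have left (hy : y ≤ c) : HasDerivWithinAt (fun y => g (max (y - c) 0)) 0 (Iic c) y :=
    (hasDerivWithinAt_const y _ (g 0)).congr_of_mem
      (fun z hz => by simp only [max_eq_right (sub_nonpos.2 (mem_Iic.1 hz))]) hy
  have right (hy : c ≤ y) :
      HasDerivWithinAt (fun y => g (max (y - c) 0)) (g' (y - c)) (Ici c) y :=
    ((hg (y - c)).comp_sub_const y c).hasDerivWithinAt.congr_of_mem
      (fun z hz => by simp only [max_eq_left (sub_nonneg.2 (mem_Ici.1 hz))]) hy
  rcases lt_trichotomy y c with hy | rfl | hy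
  · rw [max_eq_right (by linarith), hg₀]
    exact (left hy.le).hasDerivAt (Iic_mem_nhds hy)
  · rw [sub_self, max_self, hg₀, ← hasDerivWithinAt_univ, ← Iic_union_Ici (a := y)]
    exact (left le_rfl).union (by simpa only [sub_self, hg₀] using right le_rfl)
  · rw [max_eq_left (by linarith)]
    exact (right hy.le).hasDerivAt (Ici_mem_nhds hy)

namespace AdWordsSOCS

noncomputable def factor (t : ℝ) : ℝ := 3/4 + (1/4) * (1 + t/4) * exp (-t/4)

noncomputable def slope (t : ℝ) : ℝ := t * exp (-t/4) / 32

noncomputable def derivFactor (t : ℝ) : ℝ := factor t * (factor t + slope t)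

noncomputable def lowerBound (c y : ℝ) : ℝ := 1 - exp (-y) * factor (max (y - c) 0) ^ 2

lemma hasDerivAt_exp_neg (t : ℝ) : HasDerivAt (fun t => exp (-t)) (-exp (-t)) t := by
  simpa using (hasDerivAt_id t).neg.exp

lemma hasDerivAt_exp_neg_quarter (t : ℝ) :
    HasDerivAt (fun t => exp (-t/4)) (exp (-t/4) * (-1/4)) t :=
  (((hasDerivAt_id t).neg.div_const 4).congr_deriv (by simp)).exp

lemma hasDerivAt_factor (t : ℝ) : HasDerivAt factor (-slope t / 2) t := by
  have h : HasDerivAt (fun t => (1/4 : ℝ) * (1 + t/4)) (1/4 * (1/4)) t := by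
    simpa using (((hasDerivAt_id t).div_const 4).const_add 1).const_mul (1/4 : ℝ)
  exact ((h.mul (hasDerivAt_exp_neg_quarter t)).const_add (3/4)).congr_deriv
    (by unfold slope; ring)

lemma hasDerivAt_slope (t : ℝ) :
    HasDerivAt slope ((1 - t/4) * exp (-t/4) / 32) t :=
  (((hasDerivAt_id t).mul (hasDerivAt_exp_neg_quarter t)).div_const 32).congr_deriv
    (by simp only [id]; ring)

lemma factor_zero : factor 0 = 1 := by norm_num [factor]

lemma slope_zero : slope 0 = 0 := by simp [slope]

lemma three_quarters_le_factor {t : ℝ} (ht : 0 ≤ t) : 3/4 ≤ factor t := by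
  unfold factor; have := exp_pos (-t/4); nlinarith

lemma slope_nonneg {t : ℝ} (ht : 0 ≤ t) : 0 ≤ slope t := by
  unfold slope; positivity

lemma hasDerivAt_lowerBound (c y : ℝ) :
    HasDerivAt (lowerBound c) (exp (-y) * derivFactor (max (y - c) 0)) y := by
  have hF := hasDerivAt_comp_max_sub_zero hasDerivAt_factor (by simp [slope_zero]) c y
  exact (((hasDerivAt_exp_neg y).mul (hF.pow 2)).const_sub 1).congr_deriv
    (by simp only [derivFactor, Pi.pow_apply]; push_cast; ring)

lemma antitoneOn_exp_neg_mul_derivFactor :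
    AntitoneOn (fun t => exp (-t) * derivFactor t) (Ici 0) := by
  have hderiv (t : ℝ) := (hasDerivAt_exp_neg t).mul ((hasDerivAt_factor t).mul
    ((hasDerivAt_factor t).add (hasDerivAt_slope t)))
  refine antitoneOn_of_hasDerivWithinAt_nonpos (convex_Ici 0)
    (fun t _ => (hderiv t).continuousAt.continuousWithinAt)
    (fun t _ => (hderiv t).hasDerivWithinAt) fun t ht => ?_
  rw [interior_Ici, mem_Ioi] at ht
  have hF : 3/4 ≤ factor t := three_quarters_le_factor ht.le
  have hS : 0 ≤ slope t := slope_nonneg ht.le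
  have hE : exp (-t/4) ≤ 1 := exp_le_one_iff.2 (by linarith)
  have hS' : (1 - t/4) * exp (-t/4) / 32 ≤ factor t := by nlinarith [exp_pos (-t/4)]
  have key : -slope t / 2 * (factor t + slope t) + factor t * (-slope t / 2 +
      (1 - t/4) * exp (-t/4) / 32) - factor t * (factor t + slope t) ≤ 0 := by
    nlinarith [mul_nonneg (by linarith : 0 ≤ factor t) (sub_nonneg.2 hS'),
      mul_nonneg (by linarith : 0 ≤ factor t) hS, sq_nonneg (slope t)]
  simp only [Pi.mul_apply, Pi.add_apply]
  linarith [mul_nonpos_of_nonneg_of_nonpos (exp_pos (-t)).le key]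

lemma antitone_deriv_lowerBound (c : ℝ) : Antitone (deriv (lowerBound c)) := by
  simp only [funext fun y => (hasDerivAt_lowerBound c y).deriv]
  refine AntitoneOn.Iic_union_Ici (a := c) (fun x hx y hy hxy => ?_) fun x hx y hy hxy => ?_
  · simp only [max_eq_right (sub_nonpos.2 (mem_Iic.1 hx)),
      max_eq_right (sub_nonpos.2 (mem_Iic.1 hy)), derivFactor, factor_zero, slope_zero]
    simpa using exp_le_exp.2 (neg_le_neg hxy)
  · have key := antitoneOn_exp_neg_mul_derivFactor (sub_nonneg.2 (mem_Ici.1 hx))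
      (sub_nonneg.2 (mem_Ici.1 hy)) (sub_le_sub_right hxy c)
    simp only [max_eq_left (sub_nonneg.2 (mem_Ici.1 hx)),
      max_eq_left (sub_nonneg.2 (mem_Ici.1 hy))]
    have split (z : ℝ) : exp (-z) = exp (-c) * exp (-(z - c)) := by rw [← exp_add]; ring_nf
    rw [split x, split y, mul_assoc, mul_assoc]
    exact mul_le_mul_of_nonneg_left key (exp_pos _).le

lemma concaveOn_lowerBound (c : ℝ) : ConcaveOn ℝ univ (lowerBound c) :=
  (antitone_deriv_lowerBound c).concaveOn_univ_of_deriv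
    fun y => (hasDerivAt_lowerBound c y).differentiableAt

end AdWordsSOCS

/-- Appendix B.6: concavity of Equation (11) (matched-budget lower bound of the
General SOCS for AdWords), with c = 0.413. -/
theorem concave_adwords_general_socs_convergence :
    ConcaveOn ℝ (Set.Icc (0 : ℝ) 1)
      (fun y : ℝ => 1 - Real.exp (-y) *
        (3/4 + (1/4) * (1 + max (y - 0.413) 0 / 4)
          * Real.exp (-(max (y - 0.413) 0) / 4)) ^ 2) :=
  (AdWordsSOCS.concaveOn_lowerBound 0.413).subset (subset_univ _) (convex_Icc 0 1)
end

section
/- The function f(x) = e^{−x}·(1 − e^{−x/2}·(1 + x/2)) is nondecreasing on the interval [0,1]; in particular, for all 0 ≤ x ≤ 1, f(x) ≤ f(1) = 1/e − 3/(2·e^{3/2}) < 1/30. -/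
/-!
The derivative of `f x = e^{-x} (1 - e^{-x/2} (1 + x/2))` is
`e^{-x} (e^{-x/2} (1 + 3x/4) - 1)`, which is nonnegative exactly when `e^{x/2} ≤ 1 + 3x/4`.
On `[0, 1]` this chord bound follows from convexity of `exp`, because `e^{1/2} < 7/4`.
With `b = e^{1/2}` the final estimate `1/e - 3/(2 e^{3/2}) < 1/30` reads `b (30 - e) < 45`,
which needs only `e ≈ 2.718`.
-/

open Real

noncomputable def yMinusCoef (x : ℝ) : ℝ := exp (-x) * (1 - exp (-x / 2) * (1 + x / 2))

lemma exp_half_sq : exp (1 / 2 : ℝ) ^ 2 = exp 1 := by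
  rw [← exp_nat_mul]; norm_num

lemma exp_half_lt_seven_fourths : exp (1 / 2 : ℝ) < 7 / 4 := by
  have h := exp_half_sq
  nlinarith [exp_pos (1 / 2 : ℝ), exp_one_lt_d9]

lemma exp_half_le_of_mem_Icc {x : ℝ} (hx : x ∈ Set.Icc (0 : ℝ) 1) :
    exp (x / 2) ≤ 1 + 3 * x / 4 := by
  obtain ⟨hx0, hx1⟩ := hx
  have hchord := convexOn_exp.2 (Set.mem_univ 0) (Set.mem_univ (1 / 2 : ℝ))
    (sub_nonneg.2 hx1) hx0 (sub_add_cancel 1 x)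
  simp only [smul_eq_mul, mul_zero, zero_add, exp_zero, mul_one] at hchord
  calc exp (x / 2) = exp (x * (1 / 2)) := by ring_nf
    _ ≤ 1 - x + x * exp (1 / 2) := hchord
    _ ≤ 1 + 3 * x / 4 := by nlinarith [exp_half_lt_seven_fourths]

lemma hasDerivAt_yMinusCoef (x : ℝ) :
    HasDerivAt yMinusCoef (exp (-x) * (exp (-x / 2) * (1 + 3 * x / 4) - 1)) x := by
  have hneg : HasDerivAt (fun x : ℝ => exp (-x)) (-exp (-x)) x := by
    simpa using (hasDerivAt_neg x).exp
  have hhalf : HasDerivAt (fun x : ℝ => exp (-x / 2)) (exp (-x / 2) * (-1 / 2)) x :=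
    ((hasDerivAt_neg x).div_const 2).exp
  have hlin : HasDerivAt (fun x : ℝ => 1 + x / 2) (1 / 2) x := by
    simpa using ((hasDerivAt_id x).div_const 2).const_add 1
  refine (hneg.mul ((hasDerivAt_const x 1).sub (hhalf.mul hlin))).congr_deriv ?_
  simp only [Pi.sub_apply, Pi.mul_apply]
  ring

lemma one_le_exp_neg_half_mul_of_mem_Icc {x : ℝ} (hx : x ∈ Set.Icc (0 : ℝ) 1) :
    1 ≤ exp (-x / 2) * (1 + 3 * x / 4) := by
  rw [neg_div, exp_neg, ← div_eq_inv_mul, one_le_div (exp_pos _)]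
  exact exp_half_le_of_mem_Icc hx

lemma monotoneOn_yMinusCoef : MonotoneOn yMinusCoef (Set.Icc 0 1) := by
  refine monotoneOn_of_hasDerivWithinAt_nonneg (convex_Icc 0 1)
    (fun x _ => (hasDerivAt_yMinusCoef x).continuousAt.continuousWithinAt)
    (fun x _ => (hasDerivAt_yMinusCoef x).hasDerivWithinAt) fun x hx => ?_
  rw [interior_Icc] at hx
  exact mul_nonneg (exp_pos _).le
    (sub_nonneg.2 (one_le_exp_neg_half_mul_of_mem_Icc (Set.Ioo_subset_Icc_self hx)))

lemma yMinusCoef_one : yMinusCoef 1 = 1 / exp 1 - 3 / (2 * exp (3 / 2)) := by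
  have hprod : exp (-1) * exp (-1 / 2) = (exp (3 / 2))⁻¹ := by
    rw [← exp_add, ← exp_neg]; norm_num
  rw [yMinusCoef, mul_sub, mul_one, ← mul_assoc, hprod, exp_neg]
  ring

lemma one_div_exp_one_sub_three_div_lt : 1 / exp 1 - 3 / (2 * exp (3 / 2)) < 1 / 30 := by
  set b := exp (1 / 2 : ℝ)
  have hb : 0 < b := exp_pos _
  have he : exp 1 = b ^ 2 := exp_half_sq.symm
  have he' : exp (3 / 2) = b ^ 3 := by rw [← exp_nat_mul]; norm_num
  have hb_lt : b < 1.649 := by nlinarith [exp_one_lt_d9]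
  have hkey : b * (30 - b ^ 2) < 45 := by nlinarith [exp_one_gt_d9]
  rw [he, he', div_sub_div _ _ (by positivity) (by positivity),
    div_lt_div_iff₀ (by positivity) (by norm_num)]
  nlinarith [mul_lt_mul_of_pos_left hkey (pow_pos hb 2)]

/-- Appendix B.7: f(x) = e^{−x}(1 − e^{−x/2}(1 + x/2)) is nondecreasing on [0,1];
in particular it is at most f(1) = 1/e − 3/(2e^{3/2}) < 1/30 there. -/
theorem display_ads_y_minus_coef_monotone :
    MonotoneOn (fun x : ℝ => exp (-x) * (1 - exp (-x/2) * (1 + x/2)))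
      (Set.Icc (0 : ℝ) 1)
    ∧ (∀ x ∈ Set.Icc (0 : ℝ) 1,
        exp (-x) * (1 - exp (-x/2) * (1 + x/2))
          ≤ exp (-(1:ℝ)) * (1 - exp (-(1:ℝ)/2) * (1 + (1:ℝ)/2)))
    ∧ exp (-(1:ℝ)) * (1 - exp (-(1:ℝ)/2) * (1 + (1:ℝ)/2))
        = 1 / exp 1 - 3 / (2 * exp (3/2))
    ∧ 1 / exp 1 - 3 / (2 * exp (3/2)) < 1/30 :=
  ⟨monotoneOn_yMinusCoef,
    fun _ hx => monotoneOn_yMinusCoef hx (Set.right_mem_Icc.2 zero_le_one) hx.2,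
    yMinusCoef_one, one_div_exp_one_sub_three_div_lt⟩
end

section
/- For every real y with 0 ≤ y ≤ 1, one has 1 − min( e^{−y}, e^{−y}·(1 + (1/2)·max(y − 0.44, 0))·exp(−(1/2)·max(y − 0.44, 0)) + (1 − y)/15 ) ≥ 0.644·y. -/
open Real

/-- Inequality (14) (Appendix B.8): 1 − g(y) ≥ 0.644·y for the Display Ads
convergence rate g. -/
theorem display_ads_ratio (y : ℝ) (h0 : 0 ≤ y) (h1 : y ≤ 1) :
    1 - min (exp (-y))
        (exp (-y) * (1 + (1/2) * max (y - 0.44) 0)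
          * exp (-(1/2) * max (y - 0.44) 0) + (1 - y) / 15)
      ≥ 0.644 * y := by
  rcases le_or_gt y 0.87 with hc | hc
  · -- first branch: exp (-y) ≤ 1 - 0.644 y
    have hP := Real.sum_le_exp_of_nonneg h0 5
    simp [Finset.sum_range_succ, Nat.factorial] at hP
    have hpos : (0:ℝ) < exp y := exp_pos y
    have key : exp (-y) ≤ 1 - 0.644 * y := by
      rw [exp_neg, inv_le_iff_one_le_mul₀ hpos]
      have hq : (1:ℝ) ≤ (1 - 0.644 * y) * (1 + y + y ^ 2 / 2 + y ^ 3 / 6 + y ^ 4 / 24) := by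
        nlinarith [mul_nonneg h0 (by linarith : (0:ℝ) ≤ 0.87 - y),
          mul_nonneg (mul_nonneg h0 h0) (by linarith : (0:ℝ) ≤ 0.87 - y),
          mul_nonneg (mul_nonneg (mul_nonneg h0 h0) h0) (by linarith : (0:ℝ) ≤ 0.87 - y),
          mul_nonneg (mul_nonneg (mul_nonneg (mul_nonneg h0 h0) h0) h0) (by linarith : (0:ℝ) ≤ 0.87 - y)]
      nlinarith [hq, mul_le_mul_of_nonneg_left hP (by linarith : (0:ℝ) ≤ 1 - 0.644 * y)]
    have := min_le_left (exp (-y))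
        (exp (-y) * (1 + (1/2) * max (y - 0.44) 0)
          * exp (-(1/2) * max (y - 0.44) 0) + (1 - y) / 15)
    linarith
  · -- second branch
    have hmax : max (y - 0.44) 0 = y - 0.44 := max_eq_left (by linarith)
    rw [hmax]
    have hsum := Real.sum_le_exp_of_nonneg (by norm_num : (0:ℝ) ≤ 1.28) 9
    simp [Finset.sum_range_succ, Nat.factorial] at hsum
    norm_num at hsum
    have h128 : (3.5959:ℝ) ≤ exp 1.28 := by
      rw [show (1.28:ℝ) = 32/25 by norm_num]
      refine le_trans (by norm_num) hsum
    have hE : exp (-(1.28:ℝ)) ≤ 0.2781 := by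
      rw [exp_neg, inv_le_comm₀ (exp_pos _) (by norm_num)]
      calc (0.2781:ℝ)⁻¹ ≤ 3.5959 := by norm_num
        _ ≤ exp 1.28 := h128
    have hcomb : exp (-y) * exp (-(1/2) * (y - 0.44))
        = exp (-(1.28:ℝ)) * exp ((3/2) * (1 - y)) := by
      rw [← exp_add, ← exp_add]; ring_nf
    set A := exp (-(1.28:ℝ)) with hA
    set B := exp ((3/2) * (1 - y)) with hB
    have hApos : 0 < A := exp_pos _
    have hBpos : 0 < B := exp_pos _
    have hd : (0:ℝ) < 1.5 * y - 0.5 := by linarith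
    have hu : B * (1.5 * y - 0.5) ≤ 1 := by
      have h2 : 1.5 * y - 0.5 ≤ exp (-((3/2) * (1 - y))) := by
        have := Real.add_one_le_exp (-((3/2) * (1 - y))); linarith
      calc B * (1.5 * y - 0.5) ≤ B * exp (-((3/2) * (1 - y))) :=
            mul_le_mul_of_nonneg_left h2 hBpos.le
        _ = 1 := by rw [hB, ← exp_add]; simp
    have hcpos : (0:ℝ) ≤ 1 + (y - 0.44) / 2 := by linarith
    have h3 : A * B * (1 + (y - 0.44) / 2) * (1.5 * y - 0.5)
        ≤ 0.2781 * (1 + (y - 0.44) / 2) := by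
      have : A * B * (1 + (y - 0.44) / 2) * (1.5 * y - 0.5)
          = A * (1 + (y - 0.44) / 2) * (B * (1.5 * y - 0.5)) := by ring
      rw [this]
      calc A * (1 + (y - 0.44) / 2) * (B * (1.5 * y - 0.5))
          ≤ A * (1 + (y - 0.44) / 2) * 1 :=
            mul_le_mul_of_nonneg_left hu (by positivity)
        _ = A * (1 + (y - 0.44) / 2) := by ring
        _ ≤ 0.2781 * (1 + (y - 0.44) / 2) := mul_le_mul_of_nonneg_right hE hcpos
    have hbound : exp (-y) * (1 + (1/2) * (y - 0.44)) * exp (-(1/2) * (y - 0.44))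
        + (1 - y) / 15 ≤ 1 - 0.644 * y := by
      have hrw : exp (-y) * (1 + (1/2) * (y - 0.44)) * exp (-(1/2) * (y - 0.44))
          = A * B * (1 + (y - 0.44) / 2) := by
        rw [hA, hB]
        calc exp (-y) * (1 + (1/2) * (y - 0.44)) * exp (-(1/2) * (y - 0.44))
            = (exp (-y) * exp (-(1/2) * (y - 0.44))) * (1 + (1/2) * (y - 0.44)) := by ring
          _ = _ := by rw [hcomb]; ring
      rw [hrw]
      nlinarith [h3, hd, mul_nonneg (by linarith : (0:ℝ) ≤ y - 0.87) (by linarith : (0:ℝ) ≤ 1 - y),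
        mul_pos (mul_pos hApos hBpos) hd]
    have := min_le_right (exp (-y))
        (exp (-y) * (1 + (1/2) * (y - 0.44))
          * exp (-(1/2) * (y - 0.44)) + (1 - y) / 15)
    linarith
end

section
/- Let X₁, …, Xₙ be independent real random variables on a probability space such that 0 ≤ X_t ≤ 2/3 almost surely for each t, and let y = ∑_{t=1}^n E[X_t]. Then E[ max(1 − ∑_{t=1}^n X_t, 0) ] ≤ e^{−3y/2}·(1 + y/2). -/
/-!
By convexity of `z ↦ (c - z)⁺` on `[0, 2/3]`, a bid `X ∈ [0, 2/3]` independent of the rest `S`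
may be replaced by a `{0, 2/3}`-valued bid of the same mean:
`E[(c - S - X)⁺] ≤ (1 - p) E[(c - S)⁺] + p E[(c - 2/3 - S)⁺]` with `p = 3 E[X] / 2`.
As `S ≥ 0`, only the levels `c = 1` and `c = 1/3` survive, and the resulting two-term
recursion is dominated by the Poisson values `E[(1 - 2N/3)⁺] = e^{-λ} (1 + λ/3)` and
`E[(1/3 - 2N/3)⁺] = e^{-λ}/3` for `N ~ Poisson(λ)`, `λ = 3y/2`.
-/

open MeasureTheory ProbabilityTheory Real

lemma mul_max_sub_zero_le {a b v : ℝ} (hv0 : 0 ≤ v) (hvb : v ≤ b) :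
    b * max (a - v) 0 ≤ (b - v) * max a 0 + v * max (a - b) 0 := by
  rcases le_total a 0 with ha | ha <;> rcases le_total (a - v) 0 with hav | hav <;>
    rcases le_total (a - b) 0 with hab | hab <;>
    simp only [max_eq_left, max_eq_right, ha, hav, hab] <;> nlinarith

section Expectation

variable {Ω : Type*} [MeasurableSpace Ω] {μ : Measure Ω}

lemma integrable_of_ae_mem_Icc [IsFiniteMeasure μ] {V : Ω → ℝ} {b : ℝ}
    (hV : AEStronglyMeasurable V μ) (hVb : ∀ᵐ ω ∂μ, V ω ∈ Set.Icc 0 b) : Integrable V μ :=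
  .of_bound hV b <| hVb.mono fun _ h ↦ by rw [Real.norm_of_nonneg h.1]; exact h.2

lemma mul_integral_max_sub_add_le [IsFiniteMeasure μ] {S V : Ω → ℝ} {b c : ℝ}
    (hS : Integrable S μ) (hV : AEStronglyMeasurable V μ)
    (hVb : ∀ᵐ ω ∂μ, V ω ∈ Set.Icc 0 b) (hSV : IndepFun S V μ) :
    b * ∫ ω, max (c - (S ω + V ω)) 0 ∂μ ≤
      (b - ∫ ω, V ω ∂μ) * ∫ ω, max (c - S ω) 0 ∂μ
        + (∫ ω, V ω ∂μ) * ∫ ω, max (c - b - S ω) 0 ∂μ := by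
  have hVint := integrable_of_ae_mem_Icc hV hVb
  have hg (d : ℝ) : Integrable (fun ω ↦ max (d - S ω) 0) μ :=
    ((integrable_const d).sub hS).pos_part
  have hVg (d : ℝ) : Integrable (fun ω ↦ V ω * max (d - S ω) 0) μ :=
    (hg d).bdd_mul hV (c := b) <| hVb.mono fun _ h ↦ by
      rw [Real.norm_of_nonneg h.1]; exact h.2
  have hmul (d : ℝ) :
      ∫ ω, V ω * max (d - S ω) 0 ∂μ = (∫ ω, V ω ∂μ) * ∫ ω, max (d - S ω) 0 ∂μ :=
    (hSV.symm.comp measurable_id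
      ((measurable_const.sub measurable_id).max measurable_const)).integral_fun_mul_eq_mul_integral
      hV (hg d).aestronglyMeasurable
  have hlin : Integrable (fun ω ↦ b * max (c - S ω) 0 - V ω * max (c - S ω) 0) μ :=
    ((hg c).const_mul b).sub (hVg c)
  calc b * ∫ ω, max (c - (S ω + V ω)) 0 ∂μ
      = ∫ ω, b * max (c - S ω - V ω) 0 ∂μ := by simp_rw [sub_add_eq_sub_sub, integral_const_mul]
    _ ≤ ∫ ω, (b * max (c - S ω) 0 - V ω * max (c - S ω) 0 + V ω * max (c - b - S ω) 0) ∂μ := by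
      refine integral_mono_ae (((integrable_const c).sub hS |>.sub hVint).pos_part.const_mul b)
        (hlin.add (hVg (c - b))) ?_
      filter_upwards [hVb] with ω hv
      have h := mul_max_sub_zero_le (a := c - S ω) hv.1 hv.2
      rw [sub_right_comm c (S ω) b] at h
      linarith
    _ = _ := by
      rw [integral_add hlin (hVg (c - b)), integral_sub ((hg c).const_mul b) (hVg c),
        integral_const_mul, hmul, hmul]
      ring

end Expectation

lemma one_sub_mul_add_mul_le_exp_neg {p P : ℝ} (hp0 : 0 ≤ p) (hp3 : p ≤ 3) (hP : 0 ≤ P) :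
    (1 - p) * (exp (-P) * (1 + P / 3)) + p * (exp (-P) / 3) ≤
      exp (-(P + p)) * (1 + (P + p) / 3) := by
  have hcube : (1 - p / 3) ^ 3 ≤ exp (-p) := by
    simpa using one_sub_div_pow_le_exp_neg (n := 3) (t := p) (by norm_num; linarith)
  -- `(1 - u)³ (1 + u) = 1 - 2u + u³ (2 - u)` with `u = p/3`
  have hpoly : 1 - 2 * p / 3 ≤ (1 - p / 3) ^ 3 * (1 + p / 3) := by
    nlinarith [mul_nonneg (pow_nonneg hp0 3) (by linarith : (0 : ℝ) ≤ 6 - p)]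
  have key : (1 - p) * (1 + P / 3) + p / 3 ≤ exp (-p) * (1 + (P + p) / 3) := by
    nlinarith [one_sub_le_exp_neg p, mul_le_mul_of_nonneg_right hcube (by linarith : 0 ≤ 1 + p / 3)]
  calc (1 - p) * (exp (-P) * (1 + P / 3)) + p * (exp (-P) / 3)
      = exp (-P) * ((1 - p) * (1 + P / 3) + p / 3) := by ring
    _ ≤ exp (-P) * (exp (-p) * (1 + (P + p) / 3)) := by gcongr
    _ = exp (-(P + p)) * (1 + (P + p) / 3) := by rw [neg_add, exp_add]; ring

section PoissonDomination

variable {Ω : Type*} [MeasurableSpace Ω] {μ : Measure Ω}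

/-- The right-hand sides are `E[(1/3 - 2N/3)⁺]` and `E[(1 - 2N/3)⁺]` for `N ~ Poisson(r)`. -/
def PoissonDominated (μ : Measure Ω) (S : Ω → ℝ) (r : ℝ) : Prop :=
  ∫ ω, max (1 / 3 - S ω) 0 ∂μ ≤ exp (-r) / 3 ∧
    ∫ ω, max (1 - S ω) 0 ∂μ ≤ exp (-r) * (1 + r / 3)

lemma poissonDominated_zero [IsProbabilityMeasure μ] : PoissonDominated μ (fun _ ↦ 0) 0 := by
  simp [PoissonDominated]

lemma PoissonDominated.add [IsProbabilityMeasure μ] {S V : Ω → ℝ} {r : ℝ}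
    (h : PoissonDominated μ S r) (hr : 0 ≤ r) (hS : Integrable S μ) (hS0 : ∀ᵐ ω ∂μ, 0 ≤ S ω)
    (hV : AEStronglyMeasurable V μ) (hVb : ∀ᵐ ω ∂μ, V ω ∈ Set.Icc (0 : ℝ) (2 / 3))
    (hSV : IndepFun S V μ) :
    PoissonDominated μ (fun ω ↦ S ω + V ω) (r + 3 / 2 * ∫ ω, V ω ∂μ) := by
  set q := ∫ ω, V ω ∂μ
  have hq0 : 0 ≤ q := integral_nonneg_of_ae (hVb.mono fun _ h ↦ h.1)
  have hq1 : q ≤ 2 / 3 := by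
    simpa using integral_mono_ae (integrable_of_ae_mem_Icc hV hVb) (integrable_const _)
      (hVb.mono fun _ h ↦ h.2)
  have hvanish : ∫ ω, max (1 / 3 - 2 / 3 - S ω) 0 ∂μ = 0 :=
    integral_eq_zero_of_ae <| hS0.mono fun ω h ↦ max_eq_right (by linarith)
  have hthird := mul_integral_max_sub_add_le (c := 1 / 3) hS hV hVb hSV
  have hone := mul_integral_max_sub_add_le (c := 1) hS hV hVb hSV
  rw [hvanish] at hthird
  norm_num only at hone
  constructor
  · calc ∫ ω, max (1 / 3 - (S ω + V ω)) 0 ∂μ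
        ≤ (1 - 3 / 2 * q) * (exp (-r) / 3) := by nlinarith [h.1]
      _ ≤ exp (-(r + 3 / 2 * q)) / 3 := by
        rw [neg_add, exp_add]
        nlinarith [one_sub_le_exp_neg (3 / 2 * q), exp_pos (-r)]
  · calc ∫ ω, max (1 - (S ω + V ω)) 0 ∂μ
        ≤ (1 - 3 / 2 * q) * (exp (-r) * (1 + r / 3)) + 3 / 2 * q * (exp (-r) / 3) := by
          nlinarith [h.1, h.2]
      _ ≤ _ := one_sub_mul_add_mul_le_exp_neg (by linarith) (by linarith) hr

theorem poissonDominated_sum_of_mem_Icc {ι : Type*} [IsProbabilityMeasure μ]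
    {X : ι → Ω → ℝ} (hmeas : ∀ t, Measurable (X t)) (hindep : iIndepFun X μ)
    (hbound : ∀ t, ∀ᵐ ω ∂μ, X t ω ∈ Set.Icc (0 : ℝ) (2 / 3)) (s : Finset ι) :
    PoissonDominated μ (fun ω ↦ ∑ t ∈ s, X t ω) (3 / 2 * ∑ t ∈ s, ∫ ω, X t ω ∂μ) := by
  classical
  induction s using Finset.induction_on with
  | empty => simpa using poissonDominated_zero
  | insert j s hj ih =>
    have hS0 : ∀ᵐ ω ∂μ, 0 ≤ ∑ t ∈ s, X t ω :=
      ((Filter.eventually_all_finset s).2 fun t _ ↦ hbound t).mono fun _ h ↦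
        Finset.sum_nonneg fun t ht ↦ (h t ht).1
    have hSV : IndepFun (fun ω ↦ ∑ t ∈ s, X t ω) (X j) μ := by
      simpa [Finset.sum_fn] using hindep.indepFun_finsetSum_of_notMem hmeas hj
    have hr : 0 ≤ 3 / 2 * ∑ t ∈ s, ∫ ω, X t ω ∂μ := mul_nonneg (by norm_num) <|
      Finset.sum_nonneg fun t _ ↦ integral_nonneg_of_ae ((hbound t).mono fun _ h ↦ h.1)
    have hS : Integrable (fun ω ↦ ∑ t ∈ s, X t ω) μ := integrable_finsetSum s fun t _ ↦
      integrable_of_ae_mem_Icc (hmeas t).aestronglyMeasurable (hbound t)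
    have h := ih.add hr hS hS0 (hmeas j).aestronglyMeasurable (hbound j) hSV
    simp only [Finset.sum_insert hj, add_comm (X j _), add_comm (∫ ω, X j ω ∂μ)]
    convert h using 2
    ring

end PoissonDomination

/-- Probabilistic core of Lemma 5.10: for independent [0,2/3]-valued random
variables with total mean y, E[(1 − ∑ Xₜ)⁺] ≤ e^{−3y/2}(1 + y/2). -/
theorem expected_unused_budget_small_bids
    {Ω : Type*} [MeasurableSpace Ω] (μ : Measure Ω) [IsProbabilityMeasure μ]
    (n : ℕ) (X : Fin n → Ω → ℝ)
    (hmeas : ∀ t, Measurable (X t))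
    (hindep : iIndepFun X μ)
    (hbound : ∀ t, ∀ᵐ ω ∂μ, X t ω ∈ Set.Icc (0 : ℝ) (2/3))
    (y : ℝ) (hy : y = ∑ t, ∫ ω, X t ω ∂μ) :
    ∫ ω, max (1 - ∑ t, X t ω) 0 ∂μ ≤ Real.exp (-3 * y / 2) * (1 + y / 2) := by
  obtain ⟨-, h⟩ := poissonDominated_sum_of_mem_Icc hmeas hindep hbound Finset.univ
  rw [← hy] at h
  convert h using 3 <;> ring
end

section
/- Let n ≥ 0 and let f, y : Fin n → ℝ satisfy 0 ≤ y_t, 2·y_t ≤ f_t ≤ 3·y_t, and f_t ≤ 1 for every t. Let Y = ∑_t y_t. Then ∑ over all subsets R ⊆ Fin n of (3/4 + (1/4)·(|R| + 1)·2^{−|R|}) · ∏_{t ∉ R} (1 − f_t) · ∏_{t ∈ R} (f_t − y_t) ≤ (3/4)·e^{−Y} + (1/4)·e^{−3Y/2}·(1 + Y/2). -/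
open Finset

private lemma scalar_const {y : ℝ} (hy : 0 ≤ y) (hy2 : y ≤ 2) :
    1 - y ≤ Real.exp (-(3 * y) / 2) * (1 + y / 2) := by
  have h1 : 1 - y / 2 ≤ Real.exp (-(y / 2)) := by
    have := Real.add_one_le_exp (-(y / 2)); linarith
  have h0 : (0:ℝ) ≤ 1 - y / 2 := by linarith
  have h3 : (1 - y / 2) ^ 3 ≤ Real.exp (-(y / 2)) ^ 3 :=
    pow_le_pow_left₀ h0 h1 3
  have he : Real.exp (-(y / 2)) ^ 3 = Real.exp (-(3 * y) / 2) := by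
    rw [← Real.exp_nat_mul]; ring_nf
  rw [he] at h3
  have h4 : 1 - y ≤ (1 - y / 2) ^ 3 * (1 + y / 2) := by
    nlinarith [mul_nonneg (pow_nonneg hy 3) (show (0:ℝ) ≤ 4 - y by linarith)]
  have h5 := mul_le_mul_of_nonneg_right h3 (show (0:ℝ) ≤ 1 + y / 2 by linarith)
  linarith

private lemma scalar_step {fx yx Z : ℝ} (hy : 0 ≤ yx) (h2 : 2 * yx ≤ fx) (hf1 : fx ≤ 1)
    (hZ : 0 ≤ Z) :
    (1 - (fx + yx) / 2) * (1 + Z) + (fx - yx) / 2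
      ≤ Real.exp (-(3 * yx) / 2) * (1 + Z + yx / 2) := by
  have hc : 1 - (fx + yx) / 2 ≤ Real.exp (-(3 * yx) / 2) := by
    have := Real.add_one_le_exp (-(3 * yx) / 2); linarith
  have hconst : 1 - yx ≤ Real.exp (-(3 * yx) / 2) * (1 + yx / 2) :=
    scalar_const hy (by linarith)
  have hZc := mul_le_mul_of_nonneg_right hc hZ
  nlinarith

private lemma prodc_le {α : Type*} (s : Finset α) (f y : α → ℝ)
    (hy : ∀ t ∈ s, 0 ≤ y t) (h2 : ∀ t ∈ s, 2 * y t ≤ f t) (hf1 : ∀ t ∈ s, f t ≤ 1) :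
    ∏ t ∈ s, (1 - (f t + y t) / 2) ≤ Real.exp (-(3 * ∑ t ∈ s, y t) / 2) := by
  have : Real.exp (-(3 * ∑ t ∈ s, y t) / 2) = ∏ t ∈ s, Real.exp (-(3 * y t) / 2) := by
    rw [← Real.exp_sum]
    congr 1
    simp only [neg_div]
    rw [Finset.sum_neg_distrib, ← Finset.sum_div, ← Finset.mul_sum]
  rw [this]
  apply Finset.prod_le_prod
  · intro t ht
    have := hy t ht; have := h2 t ht; have := hf1 t ht; linarith
  · intro t ht
    have h1 : -(3 * y t) / 2 + 1 ≤ Real.exp (-(3 * y t) / 2) := Real.add_one_le_exp _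
    have := h2 t ht; linarith

private lemma claimA {α : Type*} [DecidableEq α] (s : Finset α) (f y : α → ℝ) :
    ∑ R ∈ s.powerset, (∏ t ∈ s \ R, (1 - f t)) * ∏ t ∈ R, ((f t - y t) / 2)
      = ∏ t ∈ s, (1 - (f t + y t) / 2) := by
  calc ∑ R ∈ s.powerset, (∏ t ∈ s \ R, (1 - f t)) * ∏ t ∈ R, ((f t - y t) / 2)
      = ∑ R ∈ s.powerset, (∏ t ∈ R, ((f t - y t) / 2)) * ∏ t ∈ s \ R, (1 - f t) :=
        Finset.sum_congr rfl fun R _ => mul_comm _ _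
    _ = ∏ t ∈ s, ((f t - y t) / 2 + (1 - f t)) := (Finset.prod_add _ _ s).symm
    _ = ∏ t ∈ s, (1 - (f t + y t) / 2) := Finset.prod_congr rfl fun t _ => by ring

private lemma claimB {α : Type*} [DecidableEq α] (s : Finset α) (f y : α → ℝ)
    (hy : ∀ t ∈ s, 0 ≤ y t) (h2 : ∀ t ∈ s, 2 * y t ≤ f t)
    (h3 : ∀ t ∈ s, f t ≤ 3 * y t) (hf1 : ∀ t ∈ s, f t ≤ 1) :
    ∑ R ∈ s.powerset,
        ((R.card : ℝ) + 1) * ((∏ t ∈ s \ R, (1 - f t)) * ∏ t ∈ R, ((f t - y t) / 2))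
      ≤ Real.exp (-(3 * ∑ t ∈ s, y t) / 2) * (1 + (∑ t ∈ s, y t) / 2) := by
  revert hy h2 h3 hf1
  induction s using Finset.induction_on with
  | empty => intro _ _ _ _; simp
  | @insert x s hx ih =>
    intro hy h2 h3 hf1
    have hy' : ∀ t ∈ s, 0 ≤ y t := fun t ht => hy t (Finset.mem_insert_of_mem ht)
    have h2' : ∀ t ∈ s, 2 * y t ≤ f t := fun t ht => h2 t (Finset.mem_insert_of_mem ht)
    have h3' : ∀ t ∈ s, f t ≤ 3 * y t := fun t ht => h3 t (Finset.mem_insert_of_mem ht)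
    have hf1' : ∀ t ∈ s, f t ≤ 1 := fun t ht => hf1 t (Finset.mem_insert_of_mem ht)
    have hyx : 0 ≤ y x := hy x (Finset.mem_insert_self x s)
    have h2x : 2 * y x ≤ f x := h2 x (Finset.mem_insert_self x s)
    have hf1x : f x ≤ 1 := hf1 x (Finset.mem_insert_self x s)
    have hxR : ∀ R ∈ s.powerset, x ∉ R := fun R hR hxR =>
      hx (Finset.mem_powerset.mp hR hxR)
    set B := ∑ R ∈ s.powerset,
        ((R.card : ℝ) + 1) * ((∏ t ∈ s \ R, (1 - f t)) * ∏ t ∈ R, ((f t - y t) / 2)) with hBdef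
    set A := ∑ R ∈ s.powerset,
        (∏ t ∈ s \ R, (1 - f t)) * ∏ t ∈ R, ((f t - y t) / 2) with hAdef
    have hxsd : ∀ R ∈ s.powerset, x ∉ s \ R := fun R _ h => hx (Finset.mem_sdiff.mp h).1
    rw [Finset.sum_powerset_insert hx]
    have e1 : ∑ R ∈ s.powerset,
          ((R.card : ℝ) + 1) * ((∏ t ∈ insert x s \ R, (1 - f t)) * ∏ t ∈ R, ((f t - y t) / 2))
        = (1 - f x) * B := by
      rw [hBdef, Finset.mul_sum]
      refine Finset.sum_congr rfl fun R hR => ?_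
      rw [Finset.insert_sdiff_of_notMem _ (hxR R hR), Finset.prod_insert (hxsd R hR)]
      ring
    have e2 : ∑ R ∈ s.powerset,
          (((insert x R).card : ℝ) + 1) *
            ((∏ t ∈ insert x s \ insert x R, (1 - f t)) * ∏ t ∈ insert x R, ((f t - y t) / 2))
        = ((f x - y x) / 2) * (B + A) := by
      have e2' : ∀ R ∈ s.powerset,
          (((insert x R).card : ℝ) + 1) *
            ((∏ t ∈ insert x s \ insert x R, (1 - f t)) * ∏ t ∈ insert x R, ((f t - y t) / 2))
          = ((f x - y x) / 2) *
              (((R.card : ℝ) + 1) * ((∏ t ∈ s \ R, (1 - f t)) * ∏ t ∈ R, ((f t - y t) / 2))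
                + (∏ t ∈ s \ R, (1 - f t)) * ∏ t ∈ R, ((f t - y t) / 2)) := by
        intro R hR
        rw [Finset.card_insert_of_notMem (hxR R hR), Finset.insert_sdiff_insert,
          Finset.sdiff_insert, Finset.erase_eq_of_notMem (hxsd R hR),
          Finset.prod_insert (hxR R hR)]
        push_cast
        ring
      rw [Finset.sum_congr rfl e2', ← Finset.mul_sum, Finset.sum_add_distrib]
    rw [e1, e2]
    have hA : A = ∏ t ∈ s, (1 - (f t + y t) / 2) := claimA s f y
    have hAle : A ≤ Real.exp (-(3 * ∑ t ∈ s, y t) / 2) := by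
      rw [hA]; exact prodc_le s f y hy' h2' hf1'
    have hBle := ih hy' h2' h3' hf1'
    set Y' := ∑ t ∈ s, y t with hY'
    have hY'0 : 0 ≤ Y' := Finset.sum_nonneg hy'
    have hc0 : (0:ℝ) ≤ 1 - (f x + y x) / 2 := by linarith
    have ha0 : (0:ℝ) ≤ (f x - y x) / 2 := by linarith
    have hE0 : (0:ℝ) < Real.exp (-(3 * Y') / 2) := Real.exp_pos _
    have step1 : (1 - f x) * B + (f x - y x) / 2 * (B + A)
        ≤ Real.exp (-(3 * Y') / 2) *
            ((1 - (f x + y x) / 2) * (1 + Y' / 2) + (f x - y x) / 2) := by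
      have hB' : (1 - (f x + y x) / 2) * B
          ≤ (1 - (f x + y x) / 2) * (Real.exp (-(3 * Y') / 2) * (1 + Y' / 2)) :=
        mul_le_mul_of_nonneg_left hBle hc0
      have hA' : (f x - y x) / 2 * A ≤ (f x - y x) / 2 * Real.exp (-(3 * Y') / 2) :=
        mul_le_mul_of_nonneg_left hAle ha0
      nlinarith [hB', hA']
    have step2 : (1 - (f x + y x) / 2) * (1 + Y' / 2) + (f x - y x) / 2
        ≤ Real.exp (-(3 * y x) / 2) * (1 + Y' / 2 + y x / 2) :=
      scalar_step hyx h2x hf1x (by linarith)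
    have hsum : ∑ t ∈ insert x s, y t = y x + Y' := Finset.sum_insert hx
    rw [hsum]
    have hexp : Real.exp (-(3 * (y x + Y')) / 2)
        = Real.exp (-(3 * Y') / 2) * Real.exp (-(3 * y x) / 2) := by
      rw [← Real.exp_add]; ring_nf
    calc (1 - f x) * B + (f x - y x) / 2 * (B + A)
        ≤ Real.exp (-(3 * Y') / 2) *
            ((1 - (f x + y x) / 2) * (1 + Y' / 2) + (f x - y x) / 2) := step1
      _ ≤ Real.exp (-(3 * Y') / 2) * (Real.exp (-(3 * y x) / 2) * (1 + Y' / 2 + y x / 2)) :=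
          mul_le_mul_of_nonneg_left step2 hE0.le
      _ = Real.exp (-(3 * (y x + Y')) / 2) * (1 + (y x + Y') / 2) := by
          rw [hexp]; ring

/-- Combinatorial core of Lemma 5.11: bound on the contribution of large
two-way surrogate types. -/
theorem adwords_large_two_way_bound
    (n : ℕ) (f y : Fin n → ℝ)
    (hy : ∀ t, 0 ≤ y t) (hfy : ∀ t, 2 * y t ≤ f t ∧ f t ≤ 3 * y t)
    (hf1 : ∀ t, f t ≤ 1) :
    ∑ R : Finset (Fin n),
        (3/4 + (1/4) * ((R.card : ℝ) + 1) / 2 ^ R.card)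
          * (∏ t ∈ Rᶜ, (1 - f t)) * ∏ t ∈ R, (f t - y t)
      ≤ (3/4) * Real.exp (-(∑ t, y t))
        + (1/4) * Real.exp (-3 * (∑ t, y t) / 2) * (1 + (∑ t, y t) / 2) := by
  classical
  have key : ∀ R : Finset (Fin n),
      (3/4 + (1/4) * ((R.card : ℝ) + 1) / 2 ^ R.card)
          * (∏ t ∈ Rᶜ, (1 - f t)) * ∏ t ∈ R, (f t - y t)
      = 3/4 * ((∏ t ∈ univ \ R, (1 - f t)) * ∏ t ∈ R, (f t - y t))
        + 1/4 * (((R.card : ℝ) + 1) *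
            ((∏ t ∈ univ \ R, (1 - f t)) * ∏ t ∈ R, ((f t - y t) / 2))) := by
    intro R
    rw [Finset.compl_eq_univ_sdiff]
    have hq : ∏ t ∈ R, ((f t - y t) / 2) = (∏ t ∈ R, (f t - y t)) / 2 ^ R.card := by
      rw [Finset.prod_div_distrib, Finset.prod_const]
    rw [hq]
    have h2 : (0:ℝ) < 2 ^ R.card := by positivity
    field_simp
  rw [Finset.sum_congr rfl fun R _ => key R, Finset.sum_add_distrib, ← Finset.mul_sum,
    ← Finset.mul_sum, ← Finset.powerset_univ]
  have part1 : ∑ R ∈ (univ : Finset (Fin n)).powerset,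
      (∏ t ∈ univ \ R, (1 - f t)) * ∏ t ∈ R, (f t - y t) ≤ Real.exp (-∑ t, y t) := by
    have hid : ∑ R ∈ (univ : Finset (Fin n)).powerset,
        (∏ t ∈ univ \ R, (1 - f t)) * ∏ t ∈ R, (f t - y t) = ∏ t, (1 - y t) := by
      calc ∑ R ∈ (univ : Finset (Fin n)).powerset,
            (∏ t ∈ univ \ R, (1 - f t)) * ∏ t ∈ R, (f t - y t)
          = ∑ R ∈ (univ : Finset (Fin n)).powerset,
            (∏ t ∈ R, (f t - y t)) * ∏ t ∈ univ \ R, (1 - f t) :=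
            Finset.sum_congr rfl fun R _ => mul_comm _ _
        _ = ∏ t, ((f t - y t) + (1 - f t)) := (Finset.prod_add _ _ _).symm
        _ = ∏ t, (1 - y t) := Finset.prod_congr rfl fun t _ => by ring
    rw [hid]
    have : Real.exp (-∑ t, y t) = ∏ t, Real.exp (-y t) := by
      rw [← Real.exp_sum, Finset.sum_neg_distrib]
    rw [this]
    apply Finset.prod_le_prod
    · intro t _
      have := hy t; have := (hfy t).1; have := hf1 t; linarith
    · intro t _
      have := Real.add_one_le_exp (-y t); linarith
  have part2 : ∑ R ∈ (univ : Finset (Fin n)).powerset,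
      ((R.card : ℝ) + 1) * ((∏ t ∈ univ \ R, (1 - f t)) * ∏ t ∈ R, ((f t - y t) / 2))
      ≤ Real.exp (-(3 * ∑ t, y t) / 2) * (1 + (∑ t, y t) / 2) :=
    claimB univ f y (fun t _ => hy t) (fun t _ => (hfy t).1) (fun t _ => (hfy t).2)
      (fun t _ => hf1 t)
  have hrw : Real.exp (-3 * (∑ t, y t) / 2) = Real.exp (-(3 * ∑ t, y t) / 2) := by ring_nf
  rw [hrw]
  have h34 : (0:ℝ) ≤ 3/4 := by norm_num
  have h14 : (0:ℝ) ≤ 1/4 := by norm_num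
  calc 3/4 * (∑ R ∈ (univ : Finset (Fin n)).powerset,
          (∏ t ∈ univ \ R, (1 - f t)) * ∏ t ∈ R, (f t - y t))
        + 1/4 * (∑ R ∈ (univ : Finset (Fin n)).powerset,
          ((R.card : ℝ) + 1) * ((∏ t ∈ univ \ R, (1 - f t)) * ∏ t ∈ R, ((f t - y t) / 2)))
      ≤ 3/4 * Real.exp (-∑ t, y t)
        + 1/4 * (Real.exp (-(3 * ∑ t, y t) / 2) * (1 + (∑ t, y t) / 2)) := by
        gcongr
    _ = 3/4 * Real.exp (-∑ t, y t)
        + 1/4 * Real.exp (-(3 * ∑ t, y t) / 2) * (1 + (∑ t, y t) / 2) := by ring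
end

section
/- Let n ≥ 0 and let f, y : Fin n → ℝ satisfy 0 ≤ y_t, 2·y_t ≤ f_t ≤ 3·y_t, and f_t ≤ 1 for every t. Let F = ∑_t f_t and Y = ∑_t y_t. Then ∏_{t} (1 − f_t/2 − y_t/2) · (1 + ∑_t (f_t − y_t)/(2 − f_t − y_t)) ≤ e^{−(F+Y)/2}·(1 + (F − Y)/2). -/
/-!
With `a t = (f t + y t) / 2` and `g t = f t - y t` the constraints become `0 ≤ g t ≤ a t < 1`, and
the left side is `∏ (1 - a t) * (1 + ∑ g t / (2 * (1 - a t)))`. Adding one index multiplies the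
product by `1 - a t` and adds `g t / 2` to the bracket; thanks to the Padé-type bound
`(2 - a) * exp a ≤ 2 + a`, this costs at most what it costs on the right side, namely a factor
`exp (-a t)` and `g t / 2` added to the bracket. Induction over the indices concludes.
-/

open Finset Real

theorem two_sub_mul_exp_le_two_add {a : ℝ} (ha : 0 ≤ a) : (2 - a) * exp a ≤ 2 + a := by
  -- `2 + x - (2 - x) eˣ` has derivative `1 - (1 - x) eˣ ≥ 0` and vanishes at `0`.
  have hmono : Monotone fun x => 2 + x - (2 - x) * exp x := by
    refine monotone_of_hasDerivAt_nonneg (f' := fun x => 1 - (1 - x) * exp x) (fun x => ?_) fun x => ?_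
    · exact (((hasDerivAt_id' x).const_add 2).sub
        (((hasDerivAt_id' x).const_sub 2).mul (hasDerivAt_exp x))).congr_deriv (by ring)
    · have := mul_le_mul_of_nonneg_right (one_sub_le_exp_neg x) (exp_pos x).le
      rw [← exp_add, neg_add_cancel, exp_zero] at this
      simpa using this
  simpa using hmono ha

theorem prod_one_sub_le_exp_neg_sum {ι : Type*} {s : Finset ι} {a : ι → ℝ}
    (ha : ∀ t ∈ s, a t ≤ 1) : ∏ t ∈ s, (1 - a t) ≤ exp (-∑ t ∈ s, a t) := by
  rw [← sum_neg_distrib, exp_sum]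
  exact prod_le_prod (fun t ht => sub_nonneg.2 (ha t ht)) fun t _ => one_sub_le_exp_neg (a t)

theorem one_sub_mul_one_add_add_half_le {a g G : ℝ} (hg : 0 ≤ g) (hga : g ≤ a) (hG : 0 ≤ G) :
    (1 - a) * (1 + G) + g / 2 ≤ exp (-a) * (1 + G + g / 2) := by
  have hpade := two_sub_mul_exp_le_two_add (hg.trans hga)
  have hlin : (1 - a) * exp a ≤ 1 := by
    simpa [← exp_add] using mul_le_mul_of_nonneg_right (one_sub_le_exp_neg a) (exp_pos a).le
  have hexp : 1 ≤ exp a := one_le_exp (hg.trans hga)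
  rw [exp_neg, ← div_eq_inv_mul, le_div_iff₀ (exp_pos a)]
  nlinarith [mul_le_mul_of_nonneg_right hga (sub_nonneg.2 hexp), mul_le_mul_of_nonneg_left hlin hG]

theorem prod_one_sub_mul_one_add_sum_le {ι : Type*} (s : Finset ι) {a g : ι → ℝ}
    (hg : ∀ t ∈ s, 0 ≤ g t) (hga : ∀ t ∈ s, g t ≤ a t) (ha : ∀ t ∈ s, a t < 1) :
    (∏ t ∈ s, (1 - a t)) * (1 + ∑ t ∈ s, g t / (2 * (1 - a t)))
      ≤ exp (-∑ t ∈ s, a t) * (1 + (∑ t ∈ s, g t) / 2) := by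
  induction s using Finset.cons_induction with
  | empty => simp
  | cons t s _ ih =>
    simp only [forall_mem_cons] at hg hga ha
    set P := ∏ u ∈ s, (1 - a u)
    set E := exp (-∑ u ∈ s, a u)
    set G := (∑ u ∈ s, g u) / 2
    have hPE : P ≤ E := prod_one_sub_le_exp_neg_sum fun u hu => (ha.2 u hu).le
    have hG : 0 ≤ G := div_nonneg (sum_nonneg hg.2) zero_le_two
    have hat : 1 - a t ≠ 0 := (sub_pos.2 ha.1).ne'
    rw [prod_cons, sum_cons, sum_cons, sum_cons]
    calc (1 - a t) * P * (1 + (g t / (2 * (1 - a t)) + ∑ u ∈ s, g u / (2 * (1 - a u))))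
        = (1 - a t) * (P * (1 + ∑ u ∈ s, g u / (2 * (1 - a u)))) + P * (g t / 2) := by
          field_simp
          ring
      _ ≤ (1 - a t) * (E * (1 + G)) + E * (g t / 2) :=
          add_le_add (mul_le_mul_of_nonneg_left (ih hg.2 hga.2 ha.2) (sub_nonneg.2 ha.1.le))
            (mul_le_mul_of_nonneg_right hPE (div_nonneg hg.1 zero_le_two))
      _ = E * ((1 - a t) * (1 + G) + g t / 2) := by ring
      _ ≤ E * (exp (-a t) * (1 + G + g t / 2)) := by
          gcongr
          exact one_sub_mul_one_add_add_half_le hg.1 hga.1 hG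
      _ = exp (-(a t + ∑ u ∈ s, a u)) * (1 + (g t + ∑ u ∈ s, g u) / 2) := by
          rw [neg_add, exp_add]
          ring

theorem adwords_hybrid_inequality_general
    (n : ℕ) (f y : Fin n → ℝ)
    (hfy : ∀ t, 2 * y t ≤ f t ∧ f t ≤ 3 * y t)
    (hf1 : ∀ t, f t ≤ 1) :
    (∏ t, (1 - f t / 2 - y t / 2)) * (1 + ∑ t, (f t - y t) / (2 - f t - y t))
      ≤ Real.exp (-((∑ t, f t) + ∑ t, y t) / 2) * (1 + ((∑ t, f t) - ∑ t, y t) / 2) := by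
  have key := prod_one_sub_mul_one_add_sum_le univ (a := fun t => (f t + y t) / 2)
    (g := fun t => f t - y t) (fun t _ => by linarith [hfy t]) (fun t _ => by linarith [hfy t])
    (fun t _ => by linarith [hfy t, hf1 t])
  convert key using 3
  · ring
  · exact sum_congr rfl fun t _ => by ring
  · rw [← sum_div, sum_add_distrib, neg_div]
  · rw [sum_sub_distrib]

/-- Hybrid-argument inequality from the proof of Lemma 5.11. -/
theorem adwords_hybrid_inequality
    (n : ℕ) (f y : Fin n → ℝ)
    (hy : ∀ t, 0 ≤ y t) (hfy : ∀ t, 2 * y t ≤ f t ∧ f t ≤ 3 * y t)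
    (hf1 : ∀ t, f t ≤ 1) :
    (∏ t, (1 - f t / 2 - y t / 2)) * (1 + ∑ t, (f t - y t) / (2 - f t - y t))
      ≤ Real.exp (-((∑ t, f t) + ∑ t, y t) / 2) * (1 + ((∑ t, f t) - ∑ t, y t) / 2) :=
  adwords_hybrid_inequality_general n f y hfy hf1
end

section
/- Let n ≥ 0 and let p, q : Fin n → ℝ satisfy p_t ≥ 0, q_t ≥ 0, and p_t + q_t ≤ 1 for every t. Then ∏_t (1 − q_t − (3/4)·p_t) + (1/4)·∑_t p_t · ∏_{t′ ≠ t} (1 − q_{t′} − (3/4)·p_{t′}) ≤ ∏_t (1 − q_t − (1/2)·p_t). -/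
/-!
Put `c t = 1 - q t - (3/4) * p t ≥ 0` and `b t = (1/4) * p t ≥ 0`, so that the right-hand side is
`∏ t, (c t + b t)`. Expanding this product, the left-hand side is exactly the sum of the terms with at
most one factor `b`, and all other terms are nonnegative.
-/

open Finset

theorem Finset.prod_add_sum_mul_prod_erase_le_prod_add {ι R : Type*} [DecidableEq ι]
    [CommSemiring R] [PartialOrder R] [IsOrderedRing R] {s : Finset ι} {b c : ι → R}
    (hb : ∀ t ∈ s, 0 ≤ b t) (hc : ∀ t ∈ s, 0 ≤ c t) :
    ∏ t ∈ s, c t + ∑ t ∈ s, b t * ∏ t' ∈ s.erase t, c t' ≤ ∏ t ∈ s, (c t + b t) := by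
  induction s using Finset.induction_on with
  | empty => simp
  | @insert x s hx ih =>
    obtain ⟨hbx, hb⟩ := forall_mem_insert _ _ _ |>.mp hb
    obtain ⟨hcx, hc⟩ := forall_mem_insert _ _ _ |>.mp hc
    have hsum : ∑ t ∈ insert x s, b t * ∏ t' ∈ (insert x s).erase t, c t'
        = b x * ∏ t ∈ s, c t + c x * ∑ t ∈ s, b t * ∏ t' ∈ s.erase t, c t' := by
      rw [sum_insert hx, erase_insert hx, mul_sum]
      congr 1
      refine sum_congr rfl fun t ht => ?_
      rw [erase_insert_of_ne (ne_of_mem_of_not_mem ht hx).symm,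
        prod_insert fun h => hx (mem_of_mem_erase h)]
      ring
    have hS : 0 ≤ ∑ t ∈ s, b t * ∏ t' ∈ s.erase t, c t' :=
      sum_nonneg fun t ht => mul_nonneg (hb t ht) <|
        prod_nonneg fun t' ht' => hc t' (mem_of_mem_erase ht')
    rw [hsum, prod_insert hx, prod_insert hx]
    set P := ∏ t ∈ s, c t
    set S := ∑ t ∈ s, b t * ∏ t' ∈ s.erase t, c t'
    calc c x * P + (b x * P + c x * S)
        ≤ c x * P + (b x * P + c x * S) + b x * S := le_add_of_nonneg_right (mul_nonneg hbx hS)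
      _ = (c x + b x) * (P + S) := by ring
      _ ≤ (c x + b x) * ∏ t ∈ s, (c t + b t) :=
          mul_le_mul_of_nonneg_left (ih hb hc) (add_nonneg hcx hbx)

theorem display_ads_remainder_nonpos_general
    (n : ℕ) (p q : Fin n → ℝ)
    (hp : ∀ t, 0 ≤ p t) (hpq : ∀ t, p t + q t ≤ 1) :
    (∏ t, (1 - q t - (3/4) * p t))
        + (1/4) * ∑ t, p t * ∏ t' ∈ univ.erase t, (1 - q t' - (3/4) * p t')
      ≤ ∏ t, (1 - q t - (1/2) * p t) := by
  have key := prod_add_sum_mul_prod_erase_le_prod_add (s := univ)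
    (b := fun t => p t / 4) (c := fun t => 1 - q t - (3/4) * p t)
    (fun t _ => by linarith [hp t]) (fun t _ => by linarith [hp t, hpq t])
  refine (le_of_eq ?_).trans (key.trans_eq ?_)
  · rw [mul_sum]
    exact congrArg _ (sum_congr rfl fun t _ => by ring)
  · exact prod_congr rfl fun t _ => by ring

/-- Remark attached to Lemma 6.3 (Two-Way SOCS for Display Ads): the last three
terms of the closed-form bound combine to a non-positive quantity. -/
theorem display_ads_remainder_nonpos
    (n : ℕ) (p q : Fin n → ℝ)
    (hp : ∀ t, 0 ≤ p t) (hq : ∀ t, 0 ≤ q t) (hpq : ∀ t, p t + q t ≤ 1) :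
    (∏ t, (1 - q t - (3/4) * p t))
        + (1/4) * ∑ t, p t * ∏ t' ∈ univ.erase t, (1 - q t' - (3/4) * p t')
      ≤ ∏ t, (1 - q t - (1/2) * p t) :=
  display_ads_remainder_nonpos_general n p q hp hpq
end

section
/- Let n ≥ 0 and let x : Fin n → ℝ satisfy x_t ≥ 0 for all t, ∑_{t′ < t} x_{t′} < 1 for every t, and ∑_{t} x_t ≤ 1. Define f_t = x_t / (1 − ∑_{t′ < t} x_{t′}). Then 0 ≤ f_t ≤ 1 for every t, and for every subset S ⊆ Fin n one has ∏_{t ∈ S} (1 − f_t) ≤ 1 − ∑_{t ∈ S} x_t. -/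
/-!
Writing `P t = ∑_{t' < t} x t'`, each factor is `1 - f t = (1 - P t - x t) / (1 - P t)`. Adding
elements of `S` in increasing order, the new element `a` lies above all previous ones, so
`1 - ∑_{s} x ≥ 1 - P a`; multiplying by `1 - f a` therefore removes at least `x a`.
-/

open Finset

lemma one_sub_div_mul_le_sub {c R B : ℝ} (hc : 0 ≤ c) (hR : 0 < R) (hRB : R ≤ B) :
    (1 - c / R) * B ≤ B - c := by
  have : c ≤ c / R * B := by
    rw [div_mul_eq_mul_div, le_div_iff₀ hR]
    exact mul_le_mul_of_nonneg_left hRB hc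
  linarith

section ArrivalProb

variable {ι : Type*} [LinearOrder ι] [LocallyFiniteOrderBot ι] {x : ι → ℝ}

noncomputable def arrivalProb (x : ι → ℝ) (t : ι) : ℝ :=
  x t / (1 - ∑ t' ∈ Iio t, x t')

lemma arrivalProb_nonneg {t : ι} (hxt : 0 ≤ x t) (hlt : ∑ t' ∈ Iio t, x t' < 1) :
    0 ≤ arrivalProb x t :=
  div_nonneg hxt (sub_nonneg.2 hlt.le)

lemma arrivalProb_le_one {t : ι} (hlt : ∑ t' ∈ Iio t, x t' < 1)
    (hle : ∑ t' ∈ Iic t, x t' ≤ 1) : arrivalProb x t ≤ 1 := by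
  rw [← Iio_insert, sum_insert (by simp)] at hle
  exact (div_le_one (sub_pos.2 hlt)).2 (by linarith)

lemma prod_one_sub_arrivalProb_le (hx : ∀ t, 0 ≤ x t) (hlt : ∀ t, ∑ t' ∈ Iio t, x t' < 1)
    (hle : ∀ t, ∑ t' ∈ Iic t, x t' ≤ 1) (S : Finset ι) :
    ∏ t ∈ S, (1 - arrivalProb x t) ≤ 1 - ∑ t ∈ S, x t := by
  induction S using Finset.induction_on_max with
  | empty => simp
  | insert a s hlt_a ih =>
    have has : a ∉ s := fun h => lt_irrefl a (hlt_a a h)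
    have hs_le : ∑ t ∈ s, x t ≤ ∑ t' ∈ Iio a, x t' :=
      sum_le_sum_of_subset_of_nonneg (fun i hi => mem_Iio.2 (hlt_a i hi)) fun i _ _ => hx i
    rw [prod_insert has, sum_insert has]
    calc (1 - arrivalProb x a) * ∏ t ∈ s, (1 - arrivalProb x t)
        ≤ (1 - arrivalProb x a) * (1 - ∑ t ∈ s, x t) :=
          mul_le_mul_of_nonneg_left ih (sub_nonneg.2 (arrivalProb_le_one (hlt a) (hle a)))
      _ ≤ (1 - ∑ t ∈ s, x t) - x a :=
          one_sub_div_mul_le_sub (hx a) (sub_pos.2 (hlt a)) (by linarith)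
      _ = 1 - (x a + ∑ t ∈ s, x t) := by ring

end ArrivalProb

/-- Feasibility verification in the proof of the Converse Jensen Inequality
(Appendix E, Equation (17)). -/
theorem converse_jensen_feasibility
    (n : ℕ) (x : Fin n → ℝ)
    (hx : ∀ t, 0 ≤ x t)
    (hlt : ∀ t : Fin n, ∑ t' ∈ Iio t, x t' < 1)
    (hsum : ∑ t, x t ≤ 1)
    (f : Fin n → ℝ) (hf : ∀ t, f t = x t / (1 - ∑ t' ∈ Iio t, x t')) :
    (∀ t, 0 ≤ f t ∧ f t ≤ 1)
    ∧ ∀ S : Finset (Fin n), ∏ t ∈ S, (1 - f t) ≤ 1 - ∑ t ∈ S, x t := by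
  have hle : ∀ t, ∑ t' ∈ Iic t, x t' ≤ 1 := fun t =>
    (sum_le_sum_of_subset_of_nonneg (subset_univ _) fun i _ _ => hx i).trans hsum
  obtain rfl : f = arrivalProb x := funext hf
  exact ⟨fun t => ⟨arrivalProb_nonneg (hx t) (hlt t), arrivalProb_le_one (hlt t) (hle t)⟩,
    prod_one_sub_arrivalProb_le hx hlt hle⟩
end

section
/- Let J be a finite set and T ≥ 0 an integer. For each t ∈ {1, …, T}, let f^t : J × J → ℝ be symmetric (f^t(j,k) = f^t(k,j)) with f^t(j,j) = 0, f^t(j,k) ≥ 0, and (1/2)·∑_{j,k ∈ J} f^t(j,k) = 1 (i.e., the weights over unordered pairs sum to 1). Define y_j^t = (1/2)·∑_{k ∈ J} f^t(j,k) and Y_j^t = ∑_{s=1}^{t} y_j^s. Suppose u assigns a real number u(S, t) to each subset S ⊆ J and each t ∈ {0, 1, …, T}, with u(S, 0) = 1 for all S, and for every t ∈ {1, …, T} and every S ⊆ J: u(S, t) ≤ ∑_{unordered pairs {j,k} with j ∉ S, k ∉ S} f^t(j,k) · u(S, t−1) + (1/2)·∑_{j ∈ S} ∑_{k ∉ S}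 f^t(j,k) · exp(Y_k^{t−1} − Y_j^{t−1}) · u(S ∪ {k}, t−1). Then for every S ⊆ J and every t ∈ {0, 1, …, T}, u(S, t) ≤ exp(−∑_{j ∈ S} Y_j^t). -/
open Finset

/-- Abstract recurrence bound (Lemma C.1): inductive content of the basic bound
for the optimal Two-Way SOCS for unweighted and vertex-weighted matching. -/
theorem two_way_socs_recurrence_bound
    {J : Type*} [Fintype J] [DecidableEq J]
    (T : ℕ) (f : ℕ → J → J → ℝ)
    (hsymm : ∀ t ∈ Icc 1 T, ∀ j k, f t j k = f t k j)
    (hdiag : ∀ t ∈ Icc 1 T, ∀ j, f t j j = 0)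
    (hnonneg : ∀ t ∈ Icc 1 T, ∀ j k, 0 ≤ f t j k)
    (htotal : ∀ t ∈ Icc 1 T, (1/2) * ∑ j : J, ∑ k : J, f t j k = 1)
    (y Y : J → ℕ → ℝ)
    (hy : ∀ j t, y j t = (1/2) * ∑ k : J, f t j k)
    (hY : ∀ j t, Y j t = ∑ s ∈ Icc 1 t, y j s)
    (u : Finset J → ℕ → ℝ)
    (hu0 : ∀ S : Finset J, u S 0 = 1)
    (hrec : ∀ t ∈ Icc 1 T, ∀ S : Finset J,
      u S t ≤ ((1/2) * ∑ j ∈ Sᶜ, ∑ k ∈ Sᶜ, f t j k) * u S (t - 1)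
        + (1/2) * ∑ j ∈ S, ∑ k ∈ Sᶜ,
            f t j k * Real.exp (Y k (t - 1) - Y j (t - 1)) * u (insert k S) (t - 1)) :
    ∀ S : Finset J, ∀ t ≤ T, u S t ≤ Real.exp (-(∑ j ∈ S, Y j t)) := by
  intro S t
  induction t generalizing S with
  | zero =>
    intro _
    simp [hu0, hY]
  | succ n ih =>
    intro hn
    have hmem : n + 1 ∈ Icc 1 T := by simp; omega
    have hfnn : ∀ j k, 0 ≤ f (n + 1) j k := hnonneg (n + 1) hmem
    have hYnn : ∀ j, 0 ≤ Y j n := by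
      intro j
      rw [hY]
      apply Finset.sum_nonneg
      intro s hs
      rw [hy]
      have hs' : s ∈ Icc 1 T := by simp at hs ⊢; omega
      have := hnonneg s hs' j
      have : 0 ≤ ∑ k : J, f s j k := Finset.sum_nonneg fun k _ => hnonneg s hs' j k
      linarith
    set E := Real.exp (-(∑ j ∈ S, Y j n)) with hEdef
    have hEpos : 0 < E := Real.exp_pos _
    -- term bound for cross terms
    have hterm : ∀ j ∈ S, ∀ k ∈ Sᶜ,
        f (n + 1) j k * Real.exp (Y k n - Y j n) * u (insert k S) n
          ≤ f (n + 1) j k * E := by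
      intro j hj k hk
      have hkS : k ∉ S := Finset.mem_compl.mp hk
      have hu := ih (insert k S) (by omega)
      have hsum : ∑ i ∈ insert k S, Y i n = Y k n + ∑ i ∈ S, Y i n :=
        Finset.sum_insert hkS
      have h1 : Real.exp (Y k n - Y j n) * u (insert k S) n
          ≤ Real.exp (Y k n - Y j n) * Real.exp (-(∑ i ∈ insert k S, Y i n)) := by
        exact mul_le_mul_of_nonneg_left hu (Real.exp_pos _).le
      have h2 : Real.exp (Y k n - Y j n) * Real.exp (-(∑ i ∈ insert k S, Y i n))
          = Real.exp (-(Y j n)) * E := by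
        rw [hEdef, ← Real.exp_add, ← Real.exp_add, hsum]; ring_nf
      have h3 : Real.exp (-(Y j n)) ≤ 1 := by
        rw [Real.exp_le_one_iff]; linarith [hYnn j]
      calc f (n + 1) j k * Real.exp (Y k n - Y j n) * u (insert k S) n
          = f (n + 1) j k * (Real.exp (Y k n - Y j n) * u (insert k S) n) := by ring
        _ ≤ f (n + 1) j k * (Real.exp (-(Y j n)) * E) := by
            rw [← h2]; exact mul_le_mul_of_nonneg_left h1 (hfnn j k)
        _ ≤ f (n + 1) j k * (1 * E) := by
            apply mul_le_mul_of_nonneg_left _ (hfnn j k)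
            exact mul_le_mul_of_nonneg_right h3 hEpos.le
        _ = f (n + 1) j k * E := by ring
    have hrec' := hrec (n + 1) hmem S
    simp only [Nat.add_sub_cancel] at hrec'
    have hAnn : 0 ≤ (1/2 : ℝ) * ∑ j ∈ Sᶜ, ∑ k ∈ Sᶜ, f (n + 1) j k := by
      apply mul_nonneg (by norm_num)
      exact Finset.sum_nonneg fun j _ => Finset.sum_nonneg fun k _ => hfnn j k
    -- algebraic identity
    have hswap : ∑ j ∈ Sᶜ, ∑ k ∈ S, f (n + 1) j k = ∑ j ∈ S, ∑ k ∈ Sᶜ, f (n + 1) j k := by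
      rw [Finset.sum_comm]
      exact Finset.sum_congr rfl fun j _ => Finset.sum_congr rfl fun k _ => hsymm _ hmem k j
    have hsplit : ∑ j : J, ∑ k : J, f (n + 1) j k
        = ((∑ j ∈ S, ∑ k ∈ S, f (n + 1) j k) + ∑ j ∈ S, ∑ k ∈ Sᶜ, f (n + 1) j k)
          + ((∑ j ∈ Sᶜ, ∑ k ∈ S, f (n + 1) j k) + ∑ j ∈ Sᶜ, ∑ k ∈ Sᶜ, f (n + 1) j k) := by
      rw [← Finset.sum_add_sum_compl S fun j => ∑ k : J, f (n + 1) j k]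
      congr 1 <;> rw [← Finset.sum_add_distrib] <;>
        exact Finset.sum_congr rfl fun j _ =>
          (Finset.sum_add_sum_compl S fun k => f (n + 1) j k).symm
    have hysum : ∑ j ∈ S, y j (n + 1)
        = (1/2) * ((∑ j ∈ S, ∑ k ∈ S, f (n + 1) j k) + ∑ j ∈ S, ∑ k ∈ Sᶜ, f (n + 1) j k) := by
      simp only [hy, ← Finset.mul_sum]
      congr 1
      rw [← Finset.sum_add_distrib]
      exact Finset.sum_congr rfl fun j _ => (Finset.sum_add_sum_compl S _).symm
    have ht := htotal (n + 1) hmem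
    have hAB : (1/2) * (∑ j ∈ Sᶜ, ∑ k ∈ Sᶜ, f (n + 1) j k)
        + (1/2) * (∑ j ∈ S, ∑ k ∈ Sᶜ, f (n + 1) j k)
        = 1 - ∑ j ∈ S, y j (n + 1) := by
      rw [hsplit] at ht
      rw [hswap] at ht
      linarith [hysum]
    have hYsucc : ∑ j ∈ S, Y j (n + 1) = (∑ j ∈ S, Y j n) + ∑ j ∈ S, y j (n + 1) := by
      rw [← Finset.sum_add_distrib]
      refine Finset.sum_congr rfl fun j _ => ?_
      rw [hY, hY, Finset.sum_Icc_succ_top (by omega : 1 ≤ n + 1)]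
    calc u S (n + 1)
        ≤ ((1/2) * ∑ j ∈ Sᶜ, ∑ k ∈ Sᶜ, f (n + 1) j k) * u S n
          + (1/2) * ∑ j ∈ S, ∑ k ∈ Sᶜ,
              f (n + 1) j k * Real.exp (Y k n - Y j n) * u (insert k S) n := hrec'
      _ ≤ ((1/2) * ∑ j ∈ Sᶜ, ∑ k ∈ Sᶜ, f (n + 1) j k) * E
          + (1/2) * ∑ j ∈ S, ∑ k ∈ Sᶜ, f (n + 1) j k * E := by
          apply add_le_add
          · exact mul_le_mul_of_nonneg_left (ih S (by omega)) hAnn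
          · apply mul_le_mul_of_nonneg_left _ (by norm_num : (0:ℝ) ≤ 1/2)
            exact Finset.sum_le_sum fun j hj => Finset.sum_le_sum fun k hk => hterm j hj k hk
      _ = ((1/2) * (∑ j ∈ Sᶜ, ∑ k ∈ Sᶜ, f (n + 1) j k)
            + (1/2) * (∑ j ∈ S, ∑ k ∈ Sᶜ, f (n + 1) j k)) * E := by
          simp only [← Finset.sum_mul]; ring
      _ = (1 - ∑ j ∈ S, y j (n + 1)) * E := by rw [hAB]
      _ ≤ Real.exp (-(∑ j ∈ S, y j (n + 1))) * E := by
          apply mul_le_mul_of_nonneg_right _ hEpos.le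
          linarith [Real.add_one_le_exp (-(∑ j ∈ S, y j (n + 1)))]
      _ = Real.exp (-(∑ j ∈ S, Y j (n + 1))) := by
          rw [hEdef, ← Real.exp_add, hYsucc]; ring_nf
end
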